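/- arXiv:math/0105068 — 7 statements merged into one kernel-verified Lean document; each statement's English description precedes it below -/
import Mathlib

section
/- Let n ≥ 1 and let (r_{ik}^{jl})_{i,j,k,l ∈ {1,…,n}} be a family of real numbers that is antisymmetric in the sense that r_{ik}^{jl} = −r_{ki}^{lj} for all i,j,k,l. Then the element T(r) := Σ_{i,j,k,l,i',j',k',l'=1}^{n} r_{ik}^{jl} · r_{i'k'}^{j'l'} · [E_{ij}, E_{i'j'}] ∧ E_{kl} ∧ E_{k'l'} of the third exterior power Λ³(gl(n,ℝ)) vanishes if and only if for all i,j,k,l,m,p ∈ {1,…,n} with (i,j) < (k,l) < (m,p) in lexicographic order one has Σ_{d=1}^{n} ( r_{ik}^{dl} r_{dm}^{jp} − r_{mk}^{dl} r_{di}^{pj} + r_{km}^{dp} r_{di}^{lj} − r_{im}^{dp} r_{dk}^{jl} + r_{mi}^{dj} r_{dk}^{pl} − r_{ki}^{dj} r_{dm}^{lp} ) = 0. -/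
/-!
Expanding the brackets `[E_{ij}, E_{i'j'}]` writes `T(r)` as `∑ c(A,B,C) E_A ∧ E_B ∧ E_C`, where
`c(A,B,C)` is the `A`-entry of the commutator `[R_B, R_C]` of the matrices
`R_{kl} = (r_{ik}^{jl})_{ij}`. For any basis `e`, the element `∑ c(A,B,C) e_A ∧ e_B ∧ e_C` vanishes
iff the alternating sum of `c` over the six orderings of `(A,B,C)` does: the determinant functional
dual to `e_A ∧ e_B ∧ e_C` extracts that alternating sum, and conversely summing the alternating sum
against `e_A ∧ e_B ∧ e_C` gives back six times the element. Being alternating, the sum only has to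
be checked on lexicographically increasing triples, where it is twice the component Yang–Baxter
expression.
-/

open ExteriorAlgebra

section Alternatize

variable {I R : Type*} [AddCommGroup R]

def alternatize (c : I → I → I → R) (i j k : I) : R :=
  c i j k - c j i k + c j k i - c k j i + c k i j - c i k j

theorem alternatize_eq_zero_of_rel (rel : I → I → Prop) [Std.Trichotomous rel]
    {c : I → I → I → R} (h : ∀ i j k, rel i j → rel j k → alternatize c i j k = 0)
    (i j k : I) : alternatize c i j k = 0 := by
  have of_rel : ∀ i j k, rel i j → alternatize c i j k = 0 := by
    intro i j k hij
    rcases trichotomous_of rel j k with hjk | rfl | hkj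
    · exact h i j k hij hjk
    · simp only [alternatize]; abel
    rcases trichotomous_of rel i k with hik | rfl | hki
    · have := h i k j hik hkj
      simp only [alternatize] at this ⊢; rw [← neg_eq_zero, ← this]; abel
    · simp only [alternatize]; abel
    · have := h k i j hki hij
      simp only [alternatize] at this ⊢; rw [← this]; abel
  rcases trichotomous_of rel i j with hij | rfl | hji
  · exact of_rel i j k hij
  · simp only [alternatize]; abel
  · have := of_rel j i k hji
    simp only [alternatize] at this ⊢; rw [← neg_eq_zero, ← this]; abel

end Alternatize

section TripleSum

variable {I N : Type*} [Fintype I] [AddCommMonoid N]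

theorem Finset.sum_sum_sum_congr {f g : I → I → I → N} (h : ∀ i j k, f i j k = g i j k) :
    ∑ i, ∑ j, ∑ k, f i j k = ∑ i, ∑ j, ∑ k, g i j k := by
  simp only [h]

theorem Finset.sum_sum_sum_comm_left (f : I → I → I → N) :
    ∑ i, ∑ j, ∑ k, f j i k = ∑ i, ∑ j, ∑ k, f i j k :=
  Finset.sum_comm

theorem Finset.sum_sum_sum_comm_right (f : I → I → I → N) :
    ∑ i, ∑ j, ∑ k, f i k j = ∑ i, ∑ j, ∑ k, f i j k :=
  Finset.sum_congr rfl fun _ _ => Finset.sum_comm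

theorem Finset.sum_sum_sum_rotate (f : I → I → I → N) :
    ∑ i, ∑ j, ∑ k, f j k i = ∑ i, ∑ j, ∑ k, f i j k :=
  (sum_sum_sum_comm_left fun i j k => f i k j).trans (sum_sum_sum_comm_right f)

end TripleSum

theorem sum_alternatize_smul_of_swap {I R N : Type*} [Fintype I] [CommRing R] [AddCommGroup N]
    [Module R N] (c : I → I → I → R) (w : I → I → I → N)
    (swap_left : ∀ i j k, w j i k = -w i j k) (swap_right : ∀ i j k, w i k j = -w i j k) :
    ∑ i, ∑ j, ∑ k, alternatize c i j k • w i j k = (6 : R) • ∑ i, ∑ j, ∑ k, c i j k • w i j k := by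
  have rotate (i j k) : w j k i = w i j k := by rw [swap_right j i k, swap_left i j k, neg_neg]
  have reverse (i j k) : w k j i = -w i j k := by rw [swap_left, rotate]
  set S := ∑ i, ∑ j, ∑ k, c i j k • w i j k
  have h_jik : ∑ i, ∑ j, ∑ k, c j i k • w i j k = -S := by
    rw [← Finset.sum_sum_sum_comm_left]
    simp only [S, ← Finset.sum_neg_distrib, ← smul_neg, ← swap_left]
  have h_ikj : ∑ i, ∑ j, ∑ k, c i k j • w i j k = -S := by
    rw [← Finset.sum_sum_sum_comm_right]
    simp only [S, ← Finset.sum_neg_distrib, ← smul_neg, ← swap_right]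
  have h_kji : ∑ i, ∑ j, ∑ k, c k j i • w i j k = -S := by
    rw [← Finset.sum_sum_sum_comm_left, ← Finset.sum_sum_sum_rotate]
    simp only [S, ← Finset.sum_neg_distrib, ← smul_neg, ← reverse]
  have h_jki : ∑ i, ∑ j, ∑ k, c j k i • w i j k = S :=
    (Finset.sum_sum_sum_congr fun i j k => by rw [rotate i j k]).trans
      (Finset.sum_sum_sum_rotate fun i j k => c i j k • w i j k)
  have h_kij : ∑ i, ∑ j, ∑ k, c k i j • w i j k = S :=
    (Finset.sum_sum_sum_congr fun i j k => by rw [rotate k i j]).trans <|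
      (Finset.sum_sum_sum_rotate fun i j k => c j k i • w j k i).trans
        (Finset.sum_sum_sum_rotate fun i j k => c i j k • w i j k)
  simp only [alternatize, sub_smul, add_smul, Finset.sum_add_distrib, Finset.sum_sub_distrib,
    h_jik, h_ikj, h_kji, h_jki, h_kij]
  module

namespace ExteriorAlgebra

variable {R M : Type*} [CommRing R] [AddCommGroup M] [Module R M]

theorem ι_mul_ι_mul_ι_swap_left (x y z : M) :
    ι R y * ι R x * ι R z = -(ι R x * ι R y * ι R z) := by
  rw [eq_neg_of_add_eq_zero_left (ι_add_mul_swap y x), neg_mul]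

theorem ι_mul_ι_mul_ι_swap_right (x y z : M) :
    ι R x * ι R z * ι R y = -(ι R x * ι R y * ι R z) := by
  rw [mul_assoc, eq_neg_of_add_eq_zero_left (ι_add_mul_swap z y), mul_neg, mul_assoc]

theorem sum_alternatize_smul {I : Type*} [Fintype I] (c : I → I → I → R) (v : I → M) :
    ∑ i, ∑ j, ∑ k, alternatize c i j k • (ι R (v i) * ι R (v j) * ι R (v k)) =
      (6 : R) • ∑ i, ∑ j, ∑ k, c i j k • (ι R (v i) * ι R (v j) * ι R (v k)) :=
  sum_alternatize_smul_of_swap c _ (fun _ _ _ => ι_mul_ι_mul_ι_swap_left ..)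
    (fun _ _ _ => ι_mul_ι_mul_ι_swap_right ..)

noncomputable def detDual {k : ℕ} (f : Fin k → Module.Dual R M) : ExteriorAlgebra R M →ₗ[R] R :=
  liftAlternating (Pi.single k (Matrix.detRowAlternating.compLinearMap (LinearMap.pi f)))

theorem detDual_ιMulti {k : ℕ} (f : Fin k → Module.Dual R M) (v : Fin k → M) :
    detDual f (ιMulti R k v) = (Matrix.of fun i j => f j (v i)).det := by
  rw [detDual, liftAlternating_apply_ιMulti, Pi.single_eq_same]
  rfl

theorem detDual_ι_mul_ι_mul_ι (f : Fin 3 → Module.Dual R M) (x y z : M) :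
    detDual f (ι R x * ι R y * ι R z) = (Matrix.of fun i j => f j (![x, y, z] i)).det := by
  rw [← detDual_ιMulti]
  simp [ιMulti_apply, mul_assoc]

theorem detDual_coord_sum_smul {I : Type*} [Fintype I] [DecidableEq I] (b : Module.Basis I R M)
    (c : I → I → I → R) (x y z : I) :
    detDual ![b.coord x, b.coord y, b.coord z]
      (∑ i, ∑ j, ∑ k, c i j k • (ι R (b i) * ι R (b j) * ι R (b k))) = alternatize c x y z := by
  simp only [map_sum, map_smul, detDual_ι_mul_ι_mul_ι, Matrix.det_fin_three, Matrix.of_apply,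
    Matrix.cons_val_zero, Matrix.cons_val_one, Matrix.cons_val, Module.Basis.coord_apply,
    Module.Basis.repr_self, Finsupp.single_apply, mul_ite, mul_one, mul_zero, smul_eq_mul,
    mul_sub, mul_add, Finset.sum_sub_distrib, Finset.sum_add_distrib, Finset.sum_ite_eq',
    Finset.mem_univ, if_true, alternatize]
  ring

theorem sum_smul_ι_mul_ι_mul_ι_eq_zero_iff {K I : Type*} [Field K] [CharZero K] [Module K M]
    [Fintype I] (b : Module.Basis I K M) (rel : I → I → Prop) [Std.Trichotomous rel]
    (c : I → I → I → K) :
    ∑ i, ∑ j, ∑ k, c i j k • (ι K (b i) * ι K (b j) * ι K (b k)) = 0 ↔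
      ∀ i j k, rel i j → rel j k → alternatize c i j k = 0 := by
  classical
  refine ⟨fun h i j k _ _ => ?_, fun h => ?_⟩
  · rw [← detDual_coord_sum_smul b c, h, map_zero]
  · have h6 := sum_alternatize_smul c b
    simp only [alternatize_eq_zero_of_rel rel h, zero_smul, Finset.sum_const_zero] at h6
    exact (smul_eq_zero.mp h6.symm).resolve_left (by norm_num)

end ExteriorAlgebra

namespace Matrix

variable {n R : Type*} [CommRing R]

-- With `r i j k l = r_{ik}^{jl}`, the bivector `r` is `∑ k l, slice r k l ∧ E_{kl}`.
def slice (r : n → n → n → n → R) (k l : n) : Matrix n n R := of fun i j => r i j k l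

theorem alternatize_slice_commutator [Fintype n] (r : n → n → n → n → R) (i j k l m p : n) :
    alternatize (fun A B C : n × n =>
        (slice r B.1 B.2 * slice r C.1 C.2 - slice r C.1 C.2 * slice r B.1 B.2) A.1 A.2)
      (i, j) (k, l) (m, p) =
    2 * ∑ d, (r i d k l * r d j m p - r m d k l * r d p i j
           + r k d m p * r d l i j - r i d m p * r d j k l
           + r m d i j * r d p k l - r k d i j * r d l m p) := by
  simp only [alternatize, sub_apply, mul_apply, slice, of_apply, Finset.mul_sum,
    ← Finset.sum_sub_distrib, ← Finset.sum_add_distrib]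
  exact Finset.sum_congr rfl fun d _ => by ring

variable [Fintype n] [DecidableEq n]

theorem eq_sum_smul_single (X : Matrix n n R) :
    X = ∑ P : n × n, X P.1 P.2 • single P.1 P.2 (1 : R) := by
  rw [Fintype.sum_prod_type]
  simp only [smul_single, smul_eq_mul, mul_one]
  exact matrix_eq_sum_single X

theorem slice_eq_sum (r : n → n → n → n → R) (k l : n) :
    slice r k l = ∑ P : n × n, r P.1 P.2 k l • single P.1 P.2 (1 : R) :=
  eq_sum_smul_single _

theorem slice_commutator (r : n → n → n → n → R) (k l k' l' : n) :
    slice r k l * slice r k' l' - slice r k' l' * slice r k l = ∑ P : n × n, ∑ Q : n × n,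
      (r P.1 P.2 k l * r Q.1 Q.2 k' l') •
        (single P.1 P.2 (1 : R) * single Q.1 Q.2 1 - single Q.1 Q.2 1 * single P.1 P.2 1) := by
  simp only [slice_eq_sum, Finset.sum_mul, Finset.mul_sum, smul_mul_smul_comm, smul_sub,
    Finset.sum_sub_distrib]
  congr 1
  · exact Finset.sum_comm
  · simp only [mul_comm]

theorem sum_smul_ι_commutator_mul_ι_mul_ι (r : n → n → n → n → R) :
    ∑ i, ∑ j, ∑ k, ∑ l, ∑ i', ∑ j', ∑ k', ∑ l', (r i j k l * r i' j' k' l') •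
      (ι R (single i j (1 : R) * single i' j' 1 - single i' j' 1 * single i j 1) *
        ι R (single k l (1 : R)) * ι R (single k' l' (1 : R))) =
    ∑ A : n × n, ∑ B : n × n, ∑ C : n × n,
      (slice r B.1 B.2 * slice r C.1 C.2 - slice r C.1 C.2 * slice r B.1 B.2) A.1 A.2 •
        (ι R (single A.1 A.2 (1 : R)) * ι R (single B.1 B.2 (1 : R)) *
          ι R (single C.1 C.2 (1 : R))) := by
  have collect : ∑ i, ∑ j, ∑ k, ∑ l, ∑ i', ∑ j', ∑ k', ∑ l', (r i j k l * r i' j' k' l') •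
      (ι R (single i j (1 : R) * single i' j' 1 - single i' j' 1 * single i j 1) *
        ι R (single k l (1 : R)) * ι R (single k' l' (1 : R))) =
      ∑ B : n × n, ∑ C : n × n,
        ι R (slice r B.1 B.2 * slice r C.1 C.2 - slice r C.1 C.2 * slice r B.1 B.2) *
          ι R (single B.1 B.2 (1 : R)) * ι R (single C.1 C.2 (1 : R)) := by
    simp only [slice_commutator, map_sum, map_smul, Finset.sum_mul, smul_mul_assoc]
    conv_rhs => enter [2, B]; rw [Finset.sum_comm]; enter [2, P]; rw [Finset.sum_comm]
    conv_rhs => rw [Finset.sum_comm]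
    simp only [Fintype.sum_prod_type]
  rw [collect]
  trans ∑ B : n × n, ∑ C : n × n, ∑ A : n × n,
      (slice r B.1 B.2 * slice r C.1 C.2 - slice r C.1 C.2 * slice r B.1 B.2) A.1 A.2 •
        (ι R (single A.1 A.2 (1 : R)) * ι R (single B.1 B.2 (1 : R)) *
          ι R (single C.1 C.2 (1 : R)))
  · refine Finset.sum_congr rfl fun B _ => Finset.sum_congr rfl fun C _ => ?_
    conv_lhs => rw [eq_sum_smul_single (_ - _)]
    simp only [map_sum, map_smul, Finset.sum_mul, smul_mul_assoc]
  · rw [Finset.sum_sum_sum_rotate, Finset.sum_sum_sum_rotate]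

end Matrix

theorem stmt_0_general (n : ℕ)
    (r : Fin n → Fin n → Fin n → Fin n → ℝ) :
    (∑ i : Fin n, ∑ j : Fin n, ∑ k : Fin n, ∑ l : Fin n,
     ∑ i' : Fin n, ∑ j' : Fin n, ∑ k' : Fin n, ∑ l' : Fin n,
      (r i j k l * r i' j' k' l') •
        (ExteriorAlgebra.ι ℝ
            (Matrix.single i j (1:ℝ) * Matrix.single i' j' (1:ℝ)
              - Matrix.single i' j' (1:ℝ) * Matrix.single i j (1:ℝ)) *
         ExteriorAlgebra.ι ℝ (Matrix.single k l (1:ℝ)) *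
         ExteriorAlgebra.ι ℝ (Matrix.single k' l' (1:ℝ)))) = 0
    ↔ ∀ i j k l m p : Fin n,
        (i < k ∨ (i = k ∧ j < l)) → (k < m ∨ (k = m ∧ l < p)) →
        ∑ d : Fin n,
          (r i d k l * r d j m p - r m d k l * r d p i j
           + r k d m p * r d l i j - r i d m p * r d j k l
           + r m d i j * r d p k l - r k d i j * r d l m p) = 0 := by
  rw [Matrix.sum_smul_ι_commutator_mul_ι_mul_ι]
  simp only [← Matrix.stdBasis_eq_single ℝ, Prod.mk.eta]
  rw [sum_smul_ι_mul_ι_mul_ι_eq_zero_iff (Matrix.stdBasis ℝ (Fin n) (Fin n))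
    (Prod.Lex (· < ·) (· < ·))]
  simp only [Prod.forall, Prod.lex_def, Matrix.alternatize_slice_commutator, mul_eq_zero,
    two_ne_zero, false_or]

/-- For an antisymmetric family `r` of coefficients encoding
`r = Σ r_{ik}^{jl} E_{ij} ∧ E_{kl} ∈ Λ²(gl(n,ℝ))`, the element
`T(r) = Σ r_{ik}^{jl} r_{i'k'}^{j'l'} [E_{ij},E_{i'j'}] ∧ E_{kl} ∧ E_{k'l'} ∈ Λ³(gl(n,ℝ))`
vanishes iff the component Yang–Baxter equations hold.
Here `r i j k l` denotes `r_{i k}^{j l}`. -/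
theorem stmt_0 (n : ℕ) (hn : 1 ≤ n)
    (r : Fin n → Fin n → Fin n → Fin n → ℝ)
    (hanti : ∀ i j k l, r i j k l = - r k l i j) :
    (∑ i : Fin n, ∑ j : Fin n, ∑ k : Fin n, ∑ l : Fin n,
     ∑ i' : Fin n, ∑ j' : Fin n, ∑ k' : Fin n, ∑ l' : Fin n,
      (r i j k l * r i' j' k' l') •
        (ExteriorAlgebra.ι ℝ
            (Matrix.single i j (1:ℝ) * Matrix.single i' j' (1:ℝ)
              - Matrix.single i' j' (1:ℝ) * Matrix.single i j (1:ℝ)) *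
         ExteriorAlgebra.ι ℝ (Matrix.single k l (1:ℝ)) *
         ExteriorAlgebra.ι ℝ (Matrix.single k' l' (1:ℝ)))) = 0
    ↔ ∀ i j k l m p : Fin n,
        (i < k ∨ (i = k ∧ j < l)) → (k < m ∨ (k = m ∧ l < p)) →
        ∑ d : Fin n,
          (r i d k l * r d j m p - r m d k l * r d p i j
           + r k d m p * r d l i j - r i d m p * r d j k l
           + r m d i j * r d p k l - r k d i j * r d l m p) = 0 :=
  stmt_0_general n r
end

section
/- Let α be a nonzero real number. Then there exists no family of real numbers (r_{ik}^{jl})_{i,j,k,l ∈ {1,2,3}} with r_{ik}^{jl} = −r_{ki}^{lj} for all indices, satisfying the component Yang–Baxter equations (for all i,j,k,l,m,p ∈ {1,2,3} with (i,j) < (k,l) < (m,p) lexicographically: Σ_{d=1}^{3} ( r_{ik}^{dl} r_{dm}^{jp} − r_{mk}^{dl} r_{di}^{pj} + r_{km}^{dp} r_{di}^{lj} − r_{im}^{dp} r_{dk}^{jl} + r_{mi}^{dj} r_{dk}^{pl} − r_{ki}^{dj} r_{dm}^{lp} ) = 0), such that for every x = (x₁,x₂,x₃) ∈ ℝ³ one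 has Σ_{i,j,k,l=1}^{3} r_{ik}^{jl} x_i x_k (e_j ∧ e_l) = (x₁² + α x₂ x₃)(e₂ ∧ e₃) in Λ²(ℝ³). In other words, the quadratic Poisson structure Λ = (x₁² + α x₂x₃) ∂₂ ∧ ∂₃ on ℝ³ is not the image of a classical r-matrix under J². -/
open ExteriorAlgebra

noncomputable def Bab (a b : Fin 3) : (Fin 3 → ℝ) [⋀^Fin 2]→ₗ[ℝ] ℝ :=
  (Matrix.detRowAlternating : (Fin 2 → ℝ) [⋀^Fin 2]→ₗ[ℝ] ℝ).compLinearMap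
    (LinearMap.pi (fun t => LinearMap.proj (![a, b] t)))

noncomputable def fdeg (a b : Fin 3) : ∀ i : ℕ, (Fin 3 → ℝ) [⋀^Fin i]→ₗ[ℝ] ℝ
  | 2 => Bab a b
  | _ => 0

noncomputable def phi (a b : Fin 3) : ExteriorAlgebra ℝ (Fin 3 → ℝ) →ₗ[ℝ] ℝ :=
  ExteriorAlgebra.liftAlternating (fdeg a b)

theorem phi_apply (a b : Fin 3) (u v : Fin 3 → ℝ) :
    phi a b (ExteriorAlgebra.ι ℝ u * ExteriorAlgebra.ι ℝ v) = u a * v b - u b * v a := by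
  rw [phi, ExteriorAlgebra.liftAlternating_ι_mul, ExteriorAlgebra.liftAlternating_ι]
  show (fdeg a b 2).curryLeft u ![v] = _
  simp only [fdeg, AlternatingMap.curryLeft_apply_apply, Bab, AlternatingMap.compLinearMap_apply]
  have hdet : ∀ g : Fin 2 → Fin 2 → ℝ, Matrix.detRowAlternating g = Matrix.det (Matrix.of g) :=
    fun g => rfl
  rw [hdet, Matrix.det_fin_two]
  simp [Matrix.vecHead, Matrix.vecTail]

set_option maxHeartbeats 4000000 in
/-- For `α ≠ 0`, the quadratic Poisson structure
`Λ = (x₁² + α x₂x₃) ∂₂ ∧ ∂₃` on `ℝ³` is not the image of a classical r-matrix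
under `J²`.  Here `r i j k l` denotes `r_{i k}^{j l}`, encoding
`r = Σ r_{ik}^{jl} E_{ij} ∧ E_{kl} ∈ Λ²(gl(3,ℝ))`; the second condition is the
component Yang–Baxter equations ([r,r] = 0) and the third says `J²(r) = Λ`. -/
theorem stmt_1 (α : ℝ) (hα : α ≠ 0) :
    ¬ ∃ r : Fin 3 → Fin 3 → Fin 3 → Fin 3 → ℝ,
      (∀ i j k l, r i j k l = - r k l i j) ∧
      (∀ i j k l m p : Fin 3,
        (i < k ∨ (i = k ∧ j < l)) → (k < m ∨ (k = m ∧ l < p)) →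
        ∑ d : Fin 3,
          (r i d k l * r d j m p - r m d k l * r d p i j
           + r k d m p * r d l i j - r i d m p * r d j k l
           + r m d i j * r d p k l - r k d i j * r d l m p) = 0) ∧
      (∀ x : Fin 3 → ℝ,
        ∑ i : Fin 3, ∑ j : Fin 3, ∑ k : Fin 3, ∑ l : Fin 3,
          (r i j k l * x i * x k) •
            (ExteriorAlgebra.ι ℝ (Pi.single j (1:ℝ) : Fin 3 → ℝ) *
             ExteriorAlgebra.ι ℝ (Pi.single l (1:ℝ) : Fin 3 → ℝ))
        = (x 0 ^ 2 + α * x 1 * x 2) •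
            (ExteriorAlgebra.ι ℝ (Pi.single 1 (1:ℝ) : Fin 3 → ℝ) *
             ExteriorAlgebra.ι ℝ (Pi.single 2 (1:ℝ) : Fin 3 → ℝ))) := by
  rintro ⟨r, h1, h2, h3⟩
  have K01_0 := by
    have K := congrArg (phi 0 1) (h3 ![1,0,0])
    simp only [Fin.sum_univ_three, map_add, LinearMap.map_smul, phi_apply, smul_eq_mul,
      Matrix.cons_val_zero, Matrix.cons_val_one, Matrix.cons_val_two,
      Matrix.vecHead, Matrix.vecTail, Pi.single_apply] at K
    simp only [show ((0:Fin 3)=1)=False from by decide, show ((0:Fin 3)=2)=False from by decide,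
      show ((1:Fin 3)=0)=False from by decide, show ((1:Fin 3)=2)=False from by decide,
      show ((2:Fin 3)=0)=False from by decide, show ((2:Fin 3)=1)=False from by decide,
      if_false, if_true] at K
    norm_num at K
    exact K
  have K01_1 := by
    have K := congrArg (phi 0 1) (h3 ![0,1,0])
    simp only [Fin.sum_univ_three, map_add, LinearMap.map_smul, phi_apply, smul_eq_mul,
      Matrix.cons_val_zero, Matrix.cons_val_one, Matrix.cons_val_two,
      Matrix.vecHead, Matrix.vecTail, Pi.single_apply] at K
    simp only [show ((0:Fin 3)=1)=False from by decide, show ((0:Fin 3)=2)=False from by decide,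
      show ((1:Fin 3)=0)=False from by decide, show ((1:Fin 3)=2)=False from by decide,
      show ((2:Fin 3)=0)=False from by decide, show ((2:Fin 3)=1)=False from by decide,
      if_false, if_true] at K
    norm_num at K
    exact K
  have K01_2 := by
    have K := congrArg (phi 0 1) (h3 ![0,0,1])
    simp only [Fin.sum_univ_three, map_add, LinearMap.map_smul, phi_apply, smul_eq_mul,
      Matrix.cons_val_zero, Matrix.cons_val_one, Matrix.cons_val_two,
      Matrix.vecHead, Matrix.vecTail, Pi.single_apply] at K
    simp only [show ((0:Fin 3)=1)=False from by decide, show ((0:Fin 3)=2)=False from by decide,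
      show ((1:Fin 3)=0)=False from by decide, show ((1:Fin 3)=2)=False from by decide,
      show ((2:Fin 3)=0)=False from by decide, show ((2:Fin 3)=1)=False from by decide,
      if_false, if_true] at K
    norm_num at K
    exact K
  have K01_01 := by
    have K := congrArg (phi 0 1) (h3 ![1,1,0])
    simp only [Fin.sum_univ_three, map_add, LinearMap.map_smul, phi_apply, smul_eq_mul,
      Matrix.cons_val_zero, Matrix.cons_val_one, Matrix.cons_val_two,
      Matrix.vecHead, Matrix.vecTail, Pi.single_apply] at K
    simp only [show ((0:Fin 3)=1)=False from by decide, show ((0:Fin 3)=2)=False from by decide,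
      show ((1:Fin 3)=0)=False from by decide, show ((1:Fin 3)=2)=False from by decide,
      show ((2:Fin 3)=0)=False from by decide, show ((2:Fin 3)=1)=False from by decide,
      if_false, if_true] at K
    norm_num at K
    exact K
  have K01_02 := by
    have K := congrArg (phi 0 1) (h3 ![1,0,1])
    simp only [Fin.sum_univ_three, map_add, LinearMap.map_smul, phi_apply, smul_eq_mul,
      Matrix.cons_val_zero, Matrix.cons_val_one, Matrix.cons_val_two,
      Matrix.vecHead, Matrix.vecTail, Pi.single_apply] at K
    simp only [show ((0:Fin 3)=1)=False from by decide, show ((0:Fin 3)=2)=False from by decide,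
      show ((1:Fin 3)=0)=False from by decide, show ((1:Fin 3)=2)=False from by decide,
      show ((2:Fin 3)=0)=False from by decide, show ((2:Fin 3)=1)=False from by decide,
      if_false, if_true] at K
    norm_num at K
    exact K
  have K01_12 := by
    have K := congrArg (phi 0 1) (h3 ![0,1,1])
    simp only [Fin.sum_univ_three, map_add, LinearMap.map_smul, phi_apply, smul_eq_mul,
      Matrix.cons_val_zero, Matrix.cons_val_one, Matrix.cons_val_two,
      Matrix.vecHead, Matrix.vecTail, Pi.single_apply] at K
    simp only [show ((0:Fin 3)=1)=False from by decide, show ((0:Fin 3)=2)=False from by decide,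
      show ((1:Fin 3)=0)=False from by decide, show ((1:Fin 3)=2)=False from by decide,
      show ((2:Fin 3)=0)=False from by decide, show ((2:Fin 3)=1)=False from by decide,
      if_false, if_true] at K
    norm_num at K
    exact K
  have K02_0 := by
    have K := congrArg (phi 0 2) (h3 ![1,0,0])
    simp only [Fin.sum_univ_three, map_add, LinearMap.map_smul, phi_apply, smul_eq_mul,
      Matrix.cons_val_zero, Matrix.cons_val_one, Matrix.cons_val_two,
      Matrix.vecHead, Matrix.vecTail, Pi.single_apply] at K
    simp only [show ((0:Fin 3)=1)=False from by decide, show ((0:Fin 3)=2)=False from by decide,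
      show ((1:Fin 3)=0)=False from by decide, show ((1:Fin 3)=2)=False from by decide,
      show ((2:Fin 3)=0)=False from by decide, show ((2:Fin 3)=1)=False from by decide,
      if_false, if_true] at K
    norm_num at K
    exact K
  have K02_1 := by
    have K := congrArg (phi 0 2) (h3 ![0,1,0])
    simp only [Fin.sum_univ_three, map_add, LinearMap.map_smul, phi_apply, smul_eq_mul,
      Matrix.cons_val_zero, Matrix.cons_val_one, Matrix.cons_val_two,
      Matrix.vecHead, Matrix.vecTail, Pi.single_apply] at K
    simp only [show ((0:Fin 3)=1)=False from by decide, show ((0:Fin 3)=2)=False from by decide,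
      show ((1:Fin 3)=0)=False from by decide, show ((1:Fin 3)=2)=False from by decide,
      show ((2:Fin 3)=0)=False from by decide, show ((2:Fin 3)=1)=False from by decide,
      if_false, if_true] at K
    norm_num at K
    exact K
  have K02_2 := by
    have K := congrArg (phi 0 2) (h3 ![0,0,1])
    simp only [Fin.sum_univ_three, map_add, LinearMap.map_smul, phi_apply, smul_eq_mul,
      Matrix.cons_val_zero, Matrix.cons_val_one, Matrix.cons_val_two,
      Matrix.vecHead, Matrix.vecTail, Pi.single_apply] at K
    simp only [show ((0:Fin 3)=1)=False from by decide, show ((0:Fin 3)=2)=False from by decide,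
      show ((1:Fin 3)=0)=False from by decide, show ((1:Fin 3)=2)=False from by decide,
      show ((2:Fin 3)=0)=False from by decide, show ((2:Fin 3)=1)=False from by decide,
      if_false, if_true] at K
    norm_num at K
    exact K
  have K02_01 := by
    have K := congrArg (phi 0 2) (h3 ![1,1,0])
    simp only [Fin.sum_univ_three, map_add, LinearMap.map_smul, phi_apply, smul_eq_mul,
      Matrix.cons_val_zero, Matrix.cons_val_one, Matrix.cons_val_two,
      Matrix.vecHead, Matrix.vecTail, Pi.single_apply] at K
    simp only [show ((0:Fin 3)=1)=False from by decide, show ((0:Fin 3)=2)=False from by decide,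
      show ((1:Fin 3)=0)=False from by decide, show ((1:Fin 3)=2)=False from by decide,
      show ((2:Fin 3)=0)=False from by decide, show ((2:Fin 3)=1)=False from by decide,
      if_false, if_true] at K
    norm_num at K
    exact K
  have K02_02 := by
    have K := congrArg (phi 0 2) (h3 ![1,0,1])
    simp only [Fin.sum_univ_three, map_add, LinearMap.map_smul, phi_apply, smul_eq_mul,
      Matrix.cons_val_zero, Matrix.cons_val_one, Matrix.cons_val_two,
      Matrix.vecHead, Matrix.vecTail, Pi.single_apply] at K
    simp only [show ((0:Fin 3)=1)=False from by decide, show ((0:Fin 3)=2)=False from by decide,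
      show ((1:Fin 3)=0)=False from by decide, show ((1:Fin 3)=2)=False from by decide,
      show ((2:Fin 3)=0)=False from by decide, show ((2:Fin 3)=1)=False from by decide,
      if_false, if_true] at K
    norm_num at K
    exact K
  have K02_12 := by
    have K := congrArg (phi 0 2) (h3 ![0,1,1])
    simp only [Fin.sum_univ_three, map_add, LinearMap.map_smul, phi_apply, smul_eq_mul,
      Matrix.cons_val_zero, Matrix.cons_val_one, Matrix.cons_val_two,
      Matrix.vecHead, Matrix.vecTail, Pi.single_apply] at K
    simp only [show ((0:Fin 3)=1)=False from by decide, show ((0:Fin 3)=2)=False from by decide,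
      show ((1:Fin 3)=0)=False from by decide, show ((1:Fin 3)=2)=False from by decide,
      show ((2:Fin 3)=0)=False from by decide, show ((2:Fin 3)=1)=False from by decide,
      if_false, if_true] at K
    norm_num at K
    exact K
  have K12_0 := by
    have K := congrArg (phi 1 2) (h3 ![1,0,0])
    simp only [Fin.sum_univ_three, map_add, LinearMap.map_smul, phi_apply, smul_eq_mul,
      Matrix.cons_val_zero, Matrix.cons_val_one, Matrix.cons_val_two,
      Matrix.vecHead, Matrix.vecTail, Pi.single_apply] at K
    simp only [show ((0:Fin 3)=1)=False from by decide, show ((0:Fin 3)=2)=False from by decide,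
      show ((1:Fin 3)=0)=False from by decide, show ((1:Fin 3)=2)=False from by decide,
      show ((2:Fin 3)=0)=False from by decide, show ((2:Fin 3)=1)=False from by decide,
      if_false, if_true] at K
    norm_num at K
    exact K
  have K12_1 := by
    have K := congrArg (phi 1 2) (h3 ![0,1,0])
    simp only [Fin.sum_univ_three, map_add, LinearMap.map_smul, phi_apply, smul_eq_mul,
      Matrix.cons_val_zero, Matrix.cons_val_one, Matrix.cons_val_two,
      Matrix.vecHead, Matrix.vecTail, Pi.single_apply] at K
    simp only [show ((0:Fin 3)=1)=False from by decide, show ((0:Fin 3)=2)=False from by decide,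
      show ((1:Fin 3)=0)=False from by decide, show ((1:Fin 3)=2)=False from by decide,
      show ((2:Fin 3)=0)=False from by decide, show ((2:Fin 3)=1)=False from by decide,
      if_false, if_true] at K
    norm_num at K
    exact K
  have K12_2 := by
    have K := congrArg (phi 1 2) (h3 ![0,0,1])
    simp only [Fin.sum_univ_three, map_add, LinearMap.map_smul, phi_apply, smul_eq_mul,
      Matrix.cons_val_zero, Matrix.cons_val_one, Matrix.cons_val_two,
      Matrix.vecHead, Matrix.vecTail, Pi.single_apply] at K
    simp only [show ((0:Fin 3)=1)=False from by decide, show ((0:Fin 3)=2)=False from by decide,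
      show ((1:Fin 3)=0)=False from by decide, show ((1:Fin 3)=2)=False from by decide,
      show ((2:Fin 3)=0)=False from by decide, show ((2:Fin 3)=1)=False from by decide,
      if_false, if_true] at K
    norm_num at K
    exact K
  have K12_01 := by
    have K := congrArg (phi 1 2) (h3 ![1,1,0])
    simp only [Fin.sum_univ_three, map_add, LinearMap.map_smul, phi_apply, smul_eq_mul,
      Matrix.cons_val_zero, Matrix.cons_val_one, Matrix.cons_val_two,
      Matrix.vecHead, Matrix.vecTail, Pi.single_apply] at K
    simp only [show ((0:Fin 3)=1)=False from by decide, show ((0:Fin 3)=2)=False from by decide,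
      show ((1:Fin 3)=0)=False from by decide, show ((1:Fin 3)=2)=False from by decide,
      show ((2:Fin 3)=0)=False from by decide, show ((2:Fin 3)=1)=False from by decide,
      if_false, if_true] at K
    norm_num at K
    exact K
  have K12_02 := by
    have K := congrArg (phi 1 2) (h3 ![1,0,1])
    simp only [Fin.sum_univ_three, map_add, LinearMap.map_smul, phi_apply, smul_eq_mul,
      Matrix.cons_val_zero, Matrix.cons_val_one, Matrix.cons_val_two,
      Matrix.vecHead, Matrix.vecTail, Pi.single_apply] at K
    simp only [show ((0:Fin 3)=1)=False from by decide, show ((0:Fin 3)=2)=False from by decide,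
      show ((1:Fin 3)=0)=False from by decide, show ((1:Fin 3)=2)=False from by decide,
      show ((2:Fin 3)=0)=False from by decide, show ((2:Fin 3)=1)=False from by decide,
      if_false, if_true] at K
    norm_num at K
    exact K
  have K12_12 := by
    have K := congrArg (phi 1 2) (h3 ![0,1,1])
    simp only [Fin.sum_univ_three, map_add, LinearMap.map_smul, phi_apply, smul_eq_mul,
      Matrix.cons_val_zero, Matrix.cons_val_one, Matrix.cons_val_two,
      Matrix.vecHead, Matrix.vecTail, Pi.single_apply] at K
    simp only [show ((0:Fin 3)=1)=False from by decide, show ((0:Fin 3)=2)=False from by decide,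
      show ((1:Fin 3)=0)=False from by decide, show ((1:Fin 3)=2)=False from by decide,
      show ((2:Fin 3)=0)=False from by decide, show ((2:Fin 3)=1)=False from by decide,
      if_false, if_true] at K
    norm_num at K
    exact K
  have C01 : r 0 0 0 1 = 0 := by linear_combination (1/2) * K01_0 + (1/2) * h1 0 1 0 0
  have C02 : r 0 0 0 2 = 0 := by linear_combination (1/2) * K02_0 + (1/2) * h1 0 2 0 0
  have C12 : r 0 1 0 2 = (1/2) := by linear_combination (1/2) * K12_0 + (1/2) * h1 0 2 0 1
  have C34 : r 1 0 1 1 = 0 := by linear_combination (1/2) * K01_1 + (1/2) * h1 1 1 1 0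
  have C35 : r 1 0 1 2 = 0 := by linear_combination (1/2) * K02_1 + (1/2) * h1 1 2 1 0
  have C45 : r 1 1 1 2 = 0 := by linear_combination (1/2) * K12_1 + (1/2) * h1 1 2 1 1
  have C67 : r 2 0 2 1 = 0 := by linear_combination (1/2) * K01_2 + (1/2) * h1 2 1 2 0
  have C68 : r 2 0 2 2 = 0 := by linear_combination (1/2) * K02_2 + (1/2) * h1 2 2 2 0
  have C78 : r 2 1 2 2 = 0 := by linear_combination (1/2) * K12_2 + (1/2) * h1 2 2 2 1
  have C04 : r 0 0 1 1 = r 0 1 1 0 := by linear_combination (1/2) * K01_01 - (1/2) * K01_0 - (1/2) * K01_1 + (1/2) * h1 1 1 0 0 - (1/2) * h1 1 0 0 1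
  have C05 : r 0 0 1 2 = r 0 2 1 0 := by linear_combination (1/2) * K02_01 - (1/2) * K02_0 - (1/2) * K02_1 + (1/2) * h1 1 2 0 0 - (1/2) * h1 1 0 0 2
  have C07 : r 0 0 2 1 = r 0 1 2 0 := by linear_combination (1/2) * K01_02 - (1/2) * K01_0 - (1/2) * K01_2 + (1/2) * h1 2 1 0 0 - (1/2) * h1 2 0 0 1
  have C08 : r 0 0 2 2 = r 0 2 2 0 := by linear_combination (1/2) * K02_02 - (1/2) * K02_0 - (1/2) * K02_2 + (1/2) * h1 2 2 0 0 - (1/2) * h1 2 0 0 2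
  have C15 : r 0 1 1 2 = r 0 2 1 1 := by linear_combination (1/2) * K12_01 - (1/2) * K12_0 - (1/2) * K12_1 + (1/2) * h1 1 2 0 1 - (1/2) * h1 1 1 0 2
  have C18 : r 0 1 2 2 = r 0 2 2 1 := by linear_combination (1/2) * K12_02 - (1/2) * K12_0 - (1/2) * K12_2 + (1/2) * h1 2 2 0 1 - (1/2) * h1 2 1 0 2
  have C37 : r 1 0 2 1 = r 1 1 2 0 := by linear_combination (1/2) * K01_12 - (1/2) * K01_1 - (1/2) * K01_2 + (1/2) * h1 2 1 1 0 - (1/2) * h1 2 0 1 1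
  have C38 : r 1 0 2 2 = r 1 2 2 0 := by linear_combination (1/2) * K02_12 - (1/2) * K02_1 - (1/2) * K02_2 + (1/2) * h1 2 2 1 0 - (1/2) * h1 2 0 1 2
  have C48 : r 1 1 2 2 = (1/2)*α + r 1 2 2 1 := by linear_combination (1/2) * K12_12 - (1/2) * K12_1 - (1/2) * K12_2 + (1/2) * h1 2 2 1 1 - (1/2) * h1 2 1 1 2
  have Y0 := h2 0 0 0 1 1 0 (by decide) (by decide)
  rw [Fin.sum_univ_three] at Y0
  have G0 : (-r 0 0 1 0*r 0 1 1 1 - r 0 0 2 0*r 0 2 1 1 + r 0 1 1 0*r 0 1 1 0 + r 0 1 2 0*r 0 2 1 0 + (1/2)*r 1 0 2 0) = 0 := by linear_combination Y0 + (((1/2)*r 0 1 1 0 + (1/2)*r 1 0 0 1)) * (h1 0 0 0 0) + ((-r 0 0 1 0 + r 1 1 1 0)) * (h1 0 1 0 0) + ((r 0 0 1 0 - r 1 0 0 0 - r 1 1 1 0)) * (C01) + ((((-1)/2)*r 1 0 1 0)) * (h1 0 1 0 1) + ((r 1 1 0 1)) * (h1 1 0 0 0) + ((r 0 1 1 0 -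 r 1 1 0 0)) * (h1 1 0 0 1) + ((-r 2 0 1 0)) * (h1 0 2 0 1) + ((r 2 0 0 0)) * (h1 1 2 0 1) + ((-r 0 2 1 0)) * (h1 2 1 0 0) + ((2*r 0 2 1 0)) * (h1 2 0 0 1) + ((-r 2 0 0 1)) * (h1 1 2 0 0) + ((r 2 1 1 0)) * (h1 0 2 0 0) + ((-r 0 0 1 0)) * (h1 1 1 0 1) + ((r 2 0 1 0)) * (C12) + ((-r 2 0 0 0)) * (C15) + ((r 0 2 1 0)) * (C07) + ((r 2 0 0 1)) * (C05) + ((-r 2 1 1 0)) * (C02) + (((1/2))) * (h1 2 0 1 0) + ((-r 0 2 1 1)) * (h1 2 0 0 0)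
  have Y1 := h2 0 0 0 1 1 1 (by decide) (by decide)
  rw [Fin.sum_univ_three] at Y1
  have G1 : (-r 0 1 2 0*r 0 2 1 1 + r 0 1 2 1*r 0 2 1 0 + (1/2)*r 1 1 2 0) = 0 := by linear_combination Y1 + ((-r 0 1 1 0 + r 1 0 0 1 + r 1 1 1 1)) * (h1 0 1 0 0) + ((-r 0 1 0 0 + r 0 1 1 1)) * (C04) + ((((-1)/2)*r 1 0 0 0 + ((-1)/2)*r 1 0 1 1)) * (h1 0 1 0 1) + (((1/2)*r 0 1 1 1)) * (h1 0 0 0 0) + ((-r 0 1 1 1)) * (h1 1 1 0 0) + ((r 0 1 1 1)) * (h1 1 0 0 1) + ((-r 2 0 1 1)) * (h1 0 2 0 1) + ((r 2 1 0 0)) * (h1 1 2 0 1) + (((-2)*r 0 2 1 1)) * (h1 2 1 0 0) + ((r 0 2 1 1)) * (h1 2 0 0 1) + ((-r 2 1 0 1)) * (h1 1 2 0 0) + ((r 2 1 1 1)) * (h1 0 2 0 0) + ((r 0 1 1 0 - r 1 0 0 1 - r 1 1 1 1)) * (C01) + ((r 2 0 1 1)) * (C12) + ((-r 2 1 0 0))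 * (C15) + ((2*r 0 2 1 1)) * (C07) + ((r 2 1 0 1)) * (C05) + ((-r 2 1 1 1)) * (C02) + (((1/2))) * (h1 2 0 1 1) + ((r 0 2 1 0)) * (h1 2 1 0 1)
  have Y2 := h2 0 0 0 1 1 2 (by decide) (by decide)
  rw [Fin.sum_univ_three] at Y2
  have G2 : ((1/2)*r 0 0 1 0 + r 0 1 1 0*r 0 2 1 1 - r 0 1 1 1*r 0 2 1 0 + r 0 2 1 0*r 0 2 2 1 - r 0 2 1 1*r 0 2 2 0 + (1/2)*r 1 2 2 0) = 0 := by linear_combination Y2 + ((r 1 0 0 1 + r 2 1 1 2)) * (h1 0 2 0 0) + ((-r 0 1 0 0 + r 0 1 1 1 + r 2 2 0 1)) * (C05) + ((-r 1 0 0 0 - r 2 0 1 2)) * (h1 0 2 0 1) + (((1/2)*r 0 1 1 2)) * (h1 0 0 0 0) + ((((-1)/2)*r 1 0 1 2)) * (h1 0 1 0 1) + ((r 1 2 0 0)) * (h1 1 1 0 1) + ((-r 0 1 1 0 + r 1 0 0 1 - r 1 1 0 0 - r 2 2 0 0)) * (C15) + ((-r 0 2 1 1 - r 1 2 0 1)) *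 (h1 1 1 0 0) + ((-r 0 2 1 0 + r 1 1 1 2)) * (h1 0 1 0 0) + ((r 0 1 1 0 + r 2 2 0 0)) * (h1 1 2 0 1) + ((-r 0 2 1 2)) * (h1 2 1 0 0) + ((r 0 2 1 2)) * (h1 2 0 0 1) + ((-r 0 1 1 1 - r 2 2 0 1)) * (h1 1 2 0 0) + ((-r 1 0 0 1 - r 2 1 1 2)) * (C02) + ((r 1 0 0 0 + r 2 0 1 2)) * (C12) + ((r 0 2 1 1)) * (h1 1 0 0 1) + ((r 0 2 1 1 + r 1 2 0 1)) * (C04) + ((r 0 2 1 0 - r 1 1 1 2)) * (C01) + ((r 0 2 1 2)) * (C07) + (((1/2))) * (h1 1 0 0 0) + (((1/2))) * (h1 2 0 1 2) + ((-r 0 2 1 1)) * (h1 2 2 0 0) + ((r 0 2 1 0)) * (h1 2 2 0 1) + ((r 0 2 1 1)) * (C08) + ((-r 0 2 1 0)) * (C18)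
  have Y3 := h2 0 0 0 1 2 0 (by decide) (by decide)
  rw [Fin.sum_univ_three] at Y3
  have G3 : (-r 0 0 1 0*r 0 1 2 1 - r 0 0 2 0*r 0 2 2 1 + r 0 1 1 0*r 0 1 2 0 + r 0 1 2 0*r 0 2 2 0) = 0 := by linear_combination Y3 + (((1/2)*r 0 1 2 0 + (1/2)*r 2 0 0 1)) * (h1 0 0 0 0) + ((-r 0 0 2 0 + r 1 1 2 0)) * (h1 0 1 0 0) + ((r 0 0 2 0 - r 1 1 2 0 - r 2 0 0 0)) * (C01) + ((((-1)/2)*r 1 0 2 0)) * (h1 0 1 0 1) + ((r 2 1 0 1)) * (h1 1 0 0 0) + ((-r 0 1 2 0)) * (h1 1 1 0 0) + ((r 0 1 2 0 - r 2 1 0 0)) * (h1 1 0 0 1) + ((-r 2 0 2 0)) * (h1 0 2 0 1) + ((r 2 2 0 1)) * (h1 2 0 0 0) + ((r 0 1 1 0 - r 0 2 2 0)) * (h1 2 1 0 0) + ((r 0 2 2 0 - r 2 2 0 0)) * (h1 2 0 0 1) + ((r 2 1 2 0)) * (h1 0 2 0 0) + ((-r 0 0 1 0)) * (h1 2 1 0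 1) + ((r 0 1 2 0)) * (C04) + ((r 2 0 2 0)) * (C12) + ((-r 0 0 2 0)) * (h1 2 2 0 1) + ((-r 0 1 1 0 + r 0 2 2 0)) * (C07) + ((r 0 1 2 0)) * (h1 2 2 0 0) + ((-r 2 1 2 0)) * (C02) + (((1/4))) * (h1 2 0 2 0) + ((r 0 0 2 0)) * (C18) + ((-r 0 1 2 0)) * (C08)
  have Y4 := h2 0 0 0 1 2 1 (by decide) (by decide)
  rw [Fin.sum_univ_three] at Y4
  have G4 : (-r 0 1 1 0*r 0 1 2 1 + r 0 1 1 1*r 0 1 2 0 - r 0 1 2 0*r 0 2 2 1 + r 0 1 2 1*r 0 2 2 0) = 0 := by linear_combination Y4 + ((-r 0 1 2 0 + r 1 1 2 1 + r 2 0 0 1)) * (h1 0 1 0 0) + ((-r 0 1 0 0 - r 0 1 1 1 + r 0 2 2 1 - r 2 2 0 1)) * (C07) + ((((-1)/2)*r 1 0 2 1 + ((-1)/2)*r 2 0 0 0)) * (h1 0 1 0 1) + (((1/2)*r 0 1 2 1)) * (h1 0 0 0 0) + ((-r 0 1 2 1 + r 2 1 0 1)) * (h1 1 1 0 0) + ((r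 0 1 2 1)) * (h1 1 0 0 1) + ((-r 2 1 0 0)) * (h1 1 1 0 1) + ((-r 2 0 2 1)) * (h1 0 2 0 1) + ((r 0 1 1 1 - r 0 2 2 1 + r 2 2 0 1)) * (h1 2 1 0 0) + ((r 0 2 2 1)) * (h1 2 0 0 1) + ((-r 0 1 1 0 - r 2 2 0 0)) * (h1 2 1 0 1) + ((r 2 1 2 1)) * (h1 0 2 0 0) + ((r 0 1 2 0 - r 1 1 2 1 - r 2 0 0 1)) * (C01) + ((r 0 1 2 1 - r 2 1 0 1)) * (C04) + ((r 2 0 2 1)) * (C12) + ((r 0 1 2 1)) * (h1 2 2 0 0) + ((-r 2 1 2 1)) * (C02) + (((1/2))) * (C67) + ((-r 0 1 2 0)) * (h1 2 2 0 1) + ((-r 0 1 2 1)) * (C08) + ((r 0 1 2 0)) * (C18)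
  have Y5 := h2 0 0 0 1 2 2 (by decide) (by decide)
  rw [Fin.sum_univ_three] at Y5
  have G5 : ((1/2)*r 0 0 2 0 + r 0 1 2 0*r 0 2 1 1 - r 0 1 2 1*r 0 2 1 0) = 0 := by linear_combination Y5 + ((r 2 0 0 1 + r 2 1 2 2)) * (h1 0 2 0 0) + ((-r 0 1 0 0)) * (C08) + ((-r 2 0 0 0 - r 2 0 2 2)) * (h1 0 2 0 1) + (((1/2)*r 0 1 2 2)) * (h1 0 0 0 0) + ((((-1)/2)*r 1 0 2 2)) * (h1 0 1 0 1) + ((r 2 1 0 1)) * (h1 1 2 0 0) + ((r 1 0 0 1 - r 1 1 0 0)) * (C18) + ((-r 2 1 0 0)) * (h1 1 2 0 1) + ((-r 0 2 2 0 + r 1 1 2 2)) * (h1 0 1 0 0) + ((r 0 2 1 1 - r 0 2 2 2)) * (h1 2 1 0 0) + ((r 0 2 2 2)) * (h1 2 0 0 1) + ((-r 2 0 0 1 - r 2 1 2 2)) * (C02) + ((r 2 0 0 0 + r 2 0 2 2)) * (C12) + ((-r 2 1 0 1)) * (C05) + ((-r 0 2 2 1)) * (h1 1 1 0 0) + ((r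 0 2 2 1)) * (h1 1 0 0 1) + ((r 2 1 0 0)) * (C15) + ((r 0 2 2 0 - r 1 1 2 2)) * (C01) + ((-r 0 2 1 1 + r 0 2 2 2)) * (C07) + (((1/2))) * (h1 2 0 0 0) + ((-r 0 2 1 0)) * (h1 2 1 0 1) + ((r 0 2 2 1)) * (C04) + (((1/2))) * (C68)
  have Y6 := h2 0 0 0 2 1 0 (by decide) (by decide)
  rw [Fin.sum_univ_three] at Y6
  have G6 : (-r 0 0 1 0*r 0 2 1 1 - r 0 0 2 0*r 0 2 1 2 + r 0 1 1 0*r 0 2 1 0 + r 0 2 1 0*r 0 2 2 0) = 0 := by linear_combination Y6 + (((1/2)*r 0 2 1 0 + (1/2)*r 1 0 0 2)) * (h1 0 0 0 0) + ((-r 0 0 1 0 + r 2 2 1 0)) * (h1 0 2 0 0) + ((r 0 0 1 0 - r 1 0 0 0 - r 2 2 1 0)) * (C02) + ((-r 1 0 1 0)) * (C12) + ((r 1 1 0 2)) * (h1 1 0 0 0) + ((-r 0 1 1 0 - r 2 0 0 2)) * (h1 1 2 0 0) + ((r 0 1 1 0 - r 1 1 0 0)) * (h1 1 0 0 2) + ((r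 1 2 1 0)) * (h1 0 1 0 0) + ((((-1)/2)*r 2 0 1 0)) * (h1 0 2 0 2) + ((r 2 0 0 0)) * (h1 1 2 0 2) + ((-r 0 2 1 0)) * (h1 2 2 0 0) + ((2*r 0 2 1 0)) * (h1 2 0 0 2) + ((((-1)/4))) * (h1 1 0 1 0) + ((-r 0 0 1 0)) * (h1 1 1 0 2) + ((r 0 1 1 0 + r 2 0 0 2)) * (C05) + ((r 0 2 1 0)) * (h1 1 1 0 0) + ((-r 1 2 1 0)) * (C01) + ((-r 0 2 1 2)) * (h1 2 0 0 0) + ((r 0 2 1 0)) * (C08) + ((-r 0 2 1 0)) * (C04)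
  have Y7 := h2 0 0 0 2 1 1 (by decide) (by decide)
  rw [Fin.sum_univ_three] at Y7
  have G7 : (((-1)/2)*r 0 0 1 0 - r 0 1 2 0*r 0 2 1 2 + r 0 2 1 0*r 0 2 2 1) = 0 := by linear_combination Y7 + ((r 1 0 0 2 + r 1 2 1 1)) * (h1 0 1 0 0) + ((-r 0 2 0 0)) * (C04) + ((-r 1 0 0 0 - r 1 0 1 1)) * (C12) + (((1/2)*r 0 2 1 1)) * (h1 0 0 0 0) + ((-r 0 1 1 1 - r 2 1 0 2)) * (h1 1 2 0 0) + ((r 0 1 1 1)) * (h1 1 0 0 2) + ((((-1)/2)*r 2 0 1 1)) * (h1 0 2 0 2) + ((r 2 1 0 0)) * (h1 1 2 0 2) + ((-r 0 2 1 1)) * (h1 2 2 0 0) + ((r 0 2 1 1)) * (h1 2 0 0 2) + ((-r 0 1 1 0 + r 2 2 1 1)) * (h1 0 2 0 0) + ((-r 1 0 0 2 - r 1 2 1 1)) * (C01) + ((((-1)/2))) * (h1 1 0 0 0) + ((((-1)/2))) * (C34) + ((r 0 1 1 1 + r 2 1 0 2)) * (C05) + ((-r 0 2 1 2)) * (h1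 2 1 0 0) + ((r 0 2 1 1)) * (C08) + ((r 0 1 1 0 - r 2 2 1 1)) * (C02) + ((r 0 2 1 2)) * (C07) + ((r 0 2 1 0)) * (h1 2 1 0 2)
  have Y8 := h2 0 0 0 2 2 0 (by decide) (by decide)
  rw [Fin.sum_univ_three] at Y8
  have G8 : (-r 0 0 1 0*r 0 2 2 1 - r 0 0 2 0*r 0 2 2 2 + r 0 1 2 0*r 0 2 1 0 + r 0 2 2 0*r 0 2 2 0 + (1/2)*r 1 0 2 0) = 0 := by linear_combination Y8 + (((1/2)*r 0 2 2 0 + (1/2)*r 2 0 0 2)) * (h1 0 0 0 0) + ((-r 0 0 2 0 + r 2 2 2 0)) * (h1 0 2 0 0) + ((r 0 0 2 0 - r 2 0 0 0 - r 2 2 2 0)) * (C02) + ((-r 1 0 2 0)) * (C12) + ((r 2 1 0 2)) * (h1 1 0 0 0) + ((-r 0 1 2 0)) * (h1 1 2 0 0) + ((r 0 1 2 0 - r 2 1 0 0)) * (h1 1 0 0 2) + ((r 1 2 2 0)) * (h1 0 1 0 0) + ((((-1)/2)*r 2 0 2 0)) * (h1 0 2 0 2) + ((r 2 2 0 2)) *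 (h1 2 0 0 0) + ((r 0 2 2 0 - r 2 2 0 0)) * (h1 2 0 0 2) + ((-r 0 0 1 0)) * (h1 2 1 0 2) + ((r 0 1 2 0)) * (C05) + ((r 0 2 1 0)) * (h1 2 1 0 0) + ((-r 1 2 2 0)) * (C01) + ((-r 0 0 2 0)) * (h1 2 2 0 2) + ((-r 0 2 1 0)) * (C07)
  have Y9 := h2 0 0 0 2 2 1 (by decide) (by decide)
  rw [Fin.sum_univ_three] at Y9
  have G9 : (((-1)/2)*r 0 0 2 0 - r 0 1 1 0*r 0 2 2 1 + r 0 1 2 0*r 0 2 1 1 - r 0 1 2 0*r 0 2 2 2 + r 0 2 2 0*r 0 2 2 1 + (1/2)*r 1 1 2 0) = 0 := by linear_combination Y9 + ((r 1 2 2 1 + r 2 0 0 2)) * (h1 0 1 0 0) + ((-r 0 2 0 0 - r 0 2 1 1 - r 2 2 0 2)) * (C07) + ((-r 1 0 2 1 - r 2 0 0 0)) * (C12) + (((1/2)*r 0 2 2 1)) * (h1 0 0 0 0) + ((r 2 1 0 2)) * (h1 1 1 0 0) + ((-r 0 1 2 1)) * (h1 1 2 0 0) + ((r 0 1 2 1))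 * (h1 1 0 0 2) + ((-r 2 1 0 0)) * (h1 1 1 0 2) + ((((-1)/2)*r 2 0 2 1)) * (h1 0 2 0 2) + ((r 0 2 1 1 + r 2 2 0 2)) * (h1 2 1 0 0) + ((r 0 2 2 1)) * (h1 2 0 0 2) + ((-r 0 1 1 0 - r 2 2 0 0)) * (h1 2 1 0 2) + ((-r 0 1 2 0 + r 2 2 2 1)) * (h1 0 2 0 0) + ((-r 1 2 2 1 - r 2 0 0 2)) * (C01) + ((((-1)/2))) * (h1 2 0 0 0) + ((((-1)/2))) * (C37) + ((-r 2 1 0 2)) * (C04) + ((r 0 1 2 1)) * (C05) + ((r 0 1 2 0 - r 2 2 2 1)) * (C02) + ((-r 0 1 2 0)) * (h1 2 2 0 2)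
  have Y10 := h2 0 0 0 2 2 2 (by decide) (by decide)
  rw [Fin.sum_univ_three] at Y10
  have G10 : (r 0 1 2 0*r 0 2 1 2 - r 0 2 1 0*r 0 2 2 1 + (1/2)*r 1 2 2 0) = 0 := by linear_combination Y10 + ((-r 0 2 2 0 + r 2 0 0 2 + r 2 2 2 2)) * (h1 0 2 0 0) + ((-r 0 2 0 0 + r 0 2 2 2)) * (C08) + ((((-1)/2)*r 2 0 0 0 + ((-1)/2)*r 2 0 2 2)) * (h1 0 2 0 2) + (((1/2)*r 0 2 2 2)) * (h1 0 0 0 0) + ((-r 1 0 2 2)) * (C12) + ((-r 0 2 2 1 + r 2 1 0 2)) * (h1 1 2 0 0) + ((r 1 0 0 2 - r 1 2 0 0)) * (C18) + ((-r 2 1 0 0)) * (h1 1 2 0 2) + ((r 1 2 2 2)) * (h1 0 1 0 0) + ((-r 0 2 2 2)) * (h1 2 2 0 0) + ((r 0 2 2 2)) * (h1 2 0 0 2) + ((r 0 2 2 0 - r 2 0 0 2 - r 2 2 2 2)) * (C02) + ((((-1)/2))) * (C38) + ((r 0 2 2 1 - r 2 1 0 2)) * (C05) + ((r 0 2 2 1))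 * (h1 1 0 0 2) + ((r 0 2 1 2)) * (h1 2 1 0 0) + ((-r 1 2 2 2)) * (C01) + ((-r 0 2 1 0)) * (h1 2 1 0 2) + ((-r 0 2 1 2)) * (C07)
  have Y11 := h2 0 0 1 0 1 1 (by decide) (by decide)
  rw [Fin.sum_univ_three] at Y11
  have G11 : (-r 0 2 1 0*r 1 1 2 0 + r 0 2 1 1*r 1 0 2 0) = 0 := by linear_combination Y11 + ((r 1 0 1 0)) * (h1 0 1 0 0) + ((((-1)/2)*r 1 0 1 1)) * (h1 0 0 0 0) + ((-r 1 1 1 1)) * (h1 1 0 0 0) + ((r 1 0 0 0)) * (C04) + ((-r 0 1 1 0 + r 1 1 0 0)) * (C34) + (((1/2)*r 0 1 1 1)) * (h1 1 0 1 0) + (((-2)*r 0 2 1 0)) * (h1 2 0 1 1) + ((r 2 1 0 0)) * (h1 1 2 1 0) + ((-r 2 0 0 0)) * (h1 1 2 1 1) + ((r 0 2 1 1)) * (h1 2 0 1 0) + ((r 2 0 1 1 - r 2 1 1 0)) * (h1 1 2 0 0) + ((-r 1 0 1 0)) * (C01) + (((1/2)*r 0 0 1 0)) * (h1 1 1 1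 1) + ((-r 2 1 0 0)) * (C35) + ((r 2 0 0 0)) * (C45) + ((-r 2 0 1 1 + r 2 1 1 0)) * (C05) + ((r 0 2 1 0)) * (h1 2 1 1 0) + ((-r 0 2 1 0)) * (C37)
  have Y12 := h2 0 0 1 0 2 1 (by decide) (by decide)
  rw [Fin.sum_univ_three] at Y12
  have G12 : (r 0 0 1 0*r 0 1 2 0 - r 0 0 1 0*r 1 1 2 1 - r 0 0 2 0*r 0 1 1 0 - r 0 0 2 0*r 1 2 2 1 + r 0 1 1 0*r 1 1 2 0 - r 0 1 2 0*r 1 2 2 0 + r 0 2 2 0*r 1 1 2 0 + r 0 2 2 1*r 1 0 2 0) = 0 := by linear_combination Y12 + ((r 2 0 1 0)) * (h1 0 1 0 0) + ((((-1)/2)*r 1 0 2 1)) * (h1 0 0 0 0) + ((-r 0 1 1 0 - r 1 2 2 1)) * (h1 2 0 0 0) + ((r 1 0 0 0 - r 2 2 1 0)) * (C07) + ((r 1 1 0 0 + r 2 2 0 0)) * (C37) + ((r 1 1 2 0 + r 2 1 1 0)) * (h1 1 1 0 0) + ((r 0 1 2 0 - r 1 1 2 1)) * (h1 1 0 0 0)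 + (((1/2)*r 0 1 2 1)) * (h1 1 0 1 0) + ((-r 2 1 0 0)) * (h1 1 1 1 0) + (((-2)*r 0 2 1 0)) * (C67) + ((r 2 2 1 0)) * (h1 2 1 0 0) + ((r 0 2 2 1)) * (h1 2 0 1 0) + ((-r 0 1 1 0 - r 2 2 0 0)) * (h1 2 1 1 0) + ((r 2 0 2 1)) * (h1 1 2 0 0) + ((-r 2 0 1 0)) * (C01) + ((-r 1 1 2 0 - r 2 1 1 0)) * (C04) + ((r 2 1 0 0)) * (C34) + ((-r 2 0 2 1)) * (C05) + ((-r 0 1 2 0)) * (h1 2 2 1 0) + ((r 1 1 2 0)) * (h1 2 2 0 0) + ((r 0 1 2 0)) * (C38) + ((-r 1 1 2 0)) * (C08)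
  have Y13 := h2 0 0 1 0 2 2 (by decide) (by decide)
  rw [Fin.sum_univ_three] at Y13
  have G13 : (((-1)/2)*α*r 0 0 1 0 + r 0 0 1 0*r 0 2 2 0 - r 0 0 1 0*r 1 2 2 1 - r 0 0 2 0*r 0 2 1 0 - r 0 0 2 0*r 1 2 2 2 + 2*r 0 1 1 0*r 1 2 2 0 - r 0 2 1 0*r 1 1 2 0 + r 0 2 2 2*r 1 0 2 0) = 0 := by linear_combination Y13 + ((r 2 0 1 0)) * (h1 0 2 0 0) + ((((-1)/2)*r 1 0 2 2)) * (h1 0 0 0 0) + ((-r 0 2 1 0 - r 1 2 2 2)) * (h1 2 0 0 0) + ((r 1 0 0 0)) * (C08) + ((-r 0 1 1 0 + r 1 1 0 0)) * (C38) + ((r 2 0 2 2 + r 2 1 1 0)) * (h1 1 2 0 0) + ((r 0 2 2 0 - r 1 1 2 2)) * (h1 1 0 0 0) + ((r 1 0 1 0)) * (C18) + ((-r 2 1 0 0)) * (h1 1 2 1 0) + (((-2)*r 0 2 1 0)) * (C68) + ((r 0 2 2 2)) * (h1 2 0 1 0) + ((-r 2 0 1 0)) * (C02) + ((-r 2 0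 2 2 - r 2 1 1 0)) * (C05) + ((r 0 0 1 0)) * (C48) + (((1/2)*r 0 2 2 1)) * (h1 1 0 1 0) + ((r 2 1 0 0)) * (C35) + ((r 1 2 2 0)) * (h1 1 1 0 0) + ((-r 0 2 1 0)) * (h1 2 1 1 0) + ((-r 1 2 2 0)) * (C04) + ((r 0 2 1 0)) * (C37)
  have Y14 := h2 0 0 1 1 2 0 (by decide) (by decide)
  rw [Fin.sum_univ_three] at Y14
  have G14 : (((-1)/2)*α*r 0 0 2 0 + r 0 0 1 0*r 0 1 2 0 - r 0 0 1 0*r 1 1 2 1 - r 0 0 2 0*r 0 1 1 0 - r 0 0 2 0*r 1 2 2 1 + r 0 1 1 1*r 1 0 2 0 - r 0 1 2 0*r 1 2 2 0 + 2*r 0 2 2 0*r 1 1 2 0) = 0 := by linear_combination Y14 + (((1/2)*r 2 0 1 1)) * (h1 0 0 0 0) + ((-r 1 0 2 0)) * (h1 0 1 0 0) + ((-r 2 0 0 0)) * (C04) + ((r 0 1 2 0 + r 2 1 1 1)) * (h1 1 0 0 0) + ((r 0 1 2 0 - r 2 1 0 0)) * (C34) + ((((-1)/2)*r 0 2 1 1))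 * (h1 2 0 2 0) + ((-r 0 1 1 0 + r 2 2 1 1)) * (h1 2 0 0 0) + ((-r 1 2 2 0)) * (h1 2 1 0 0) + ((r 0 2 2 0 - r 2 2 0 0)) * (h1 2 0 1 1) + ((r 2 1 2 0)) * (h1 1 2 0 0) + ((r 1 0 2 0)) * (C01) + ((-r 0 0 1 0)) * (h1 2 1 1 1) + ((-r 0 0 2 0)) * (h1 2 2 1 1) + ((r 1 2 2 0)) * (C07) + ((r 1 1 2 0)) * (h1 2 2 0 0) + ((-r 2 1 2 0)) * (C05) + ((r 0 0 2 0)) * (C48) + ((-r 1 1 2 0)) * (C08) + ((-r 0 2 1 0)) * (h1 2 1 2 0) + ((r 0 2 1 0)) * (C67)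
  have Y15 := h2 0 0 1 1 2 1 (by decide) (by decide)
  rw [Fin.sum_univ_three] at Y15
  have G15 : (((-1)/2)*α*r 0 1 2 0 + r 0 0 1 0*r 0 1 2 1 - r 0 0 2 0*r 0 1 1 1 - r 0 1 1 0*r 1 1 2 1 + r 0 1 1 1*r 1 1 2 0 + (-2)*r 0 1 2 0*r 1 2 2 1 + r 0 2 2 0*r 1 1 2 1 + r 0 2 2 1*r 1 1 2 0) = 0 := by linear_combination Y15 + ((-r 1 0 2 1 + r 2 0 1 1)) * (h1 0 1 0 0) + ((-r 0 1 1 1)) * (h1 2 0 0 0) + ((r 0 1 2 1)) * (h1 1 0 0 0) + ((-r 0 1 1 1)) * (C37) + ((r 2 1 1 1)) * (h1 1 1 0 0) + ((r 0 1 2 1)) * (C34) + ((((-1)/2)*r 2 1 0 0)) * (h1 1 1 1 1) + ((-r 0 2 1 1)) * (C67) + ((-r 1 2 2 1 + r 2 2 1 1)) * (h1 2 1 0 0) + ((r 0 2 2 1)) * (h1 2 0 1 1) + ((-r 0 1 1 0 - r 2 2 0 0)) * (h1 2 1 1 1) + ((r 2 1 2 1)) * (h1 1 2 0 0) + ((r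 1 0 2 1 - r 2 0 1 1)) * (C01) + ((-r 2 1 1 1)) * (C04) + ((r 1 2 2 1 - r 2 2 1 1)) * (C07) + ((r 1 1 2 1)) * (h1 2 2 0 0) + ((-r 2 1 2 1)) * (C05) + ((-r 0 1 2 0)) * (h1 2 2 1 1) + ((-r 1 1 2 1)) * (C08) + ((((-1)/2)*r 0 2 1 0)) * (h1 2 1 2 1) + ((r 0 1 2 0)) * (C48)
  have Y16 := h2 0 0 1 1 2 2 (by decide) (by decide)
  rw [Fin.sum_univ_three] at Y16
  have G16 : (r 0 0 1 0*r 0 2 2 1 - r 0 0 2 0*r 0 2 1 1 + r 0 1 1 1*r 1 2 2 0 - r 0 1 2 0*r 1 2 2 2 - r 0 2 1 0*r 1 1 2 1 + r 0 2 2 2*r 1 1 2 0) = 0 := by linear_combination Y16 + ((r 2 0 1 1)) * (h1 0 2 0 0) + ((-r 1 0 2 2)) * (h1 0 1 0 0) + ((-r 0 2 1 1)) * (h1 2 0 0 0) + ((r 1 0 0 0 + r 1 0 1 1)) * (C18) + ((-r 0 1 1 1)) * (C38) + ((r 2 1 1 1 + r 2 1 2 2)) * (h1 1 2 0 0) + ((-r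 2 1 0 0)) * (h1 1 2 1 1) + ((-r 0 2 1 1)) * (C68) + ((-r 1 2 2 2)) * (h1 2 1 0 0) + ((r 0 2 2 2)) * (h1 2 0 1 1) + ((-r 2 0 1 1)) * (C02) + ((r 1 0 2 2)) * (C01) + ((r 0 2 2 1)) * (h1 1 0 0 0) + ((-r 2 1 1 1 - r 2 1 2 2)) * (C05) + ((r 0 2 2 1)) * (C34) + ((r 2 1 0 0)) * (C45) + ((r 1 2 2 2)) * (C07) + ((-r 0 2 1 0)) * (h1 2 1 1 1) + ((-r 0 2 1 0)) * (C78)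
  have Y17 := h2 0 0 1 2 2 0 (by decide) (by decide)
  rw [Fin.sum_univ_three] at Y17
  have G17 : (r 0 0 1 0*r 0 2 2 0 - r 0 0 1 0*r 1 2 2 1 - r 0 0 2 0*r 0 2 1 0 - r 0 0 2 0*r 1 2 2 2 + r 0 1 1 0*r 1 2 2 0 - r 0 2 1 0*r 1 1 2 0 + r 0 2 1 1*r 1 0 2 0 + r 0 2 2 0*r 1 2 2 0) = 0 := by linear_combination Y17 + (((1/2)*r 2 0 1 2)) * (h1 0 0 0 0) + ((-r 1 0 2 0)) * (h1 0 2 0 0) + ((r 1 1 2 0 - r 2 0 0 0 - r 2 2 2 0)) * (C05) + ((r 0 2 2 0 + r 2 1 1 2)) * (h1 1 0 0 0) + ((-r 1 0 2 0)) * (C15) + ((-r 1 1 2 0 + r 2 2 2 0)) * (h1 1 2 0 0) + ((r 0 1 2 0 - r 2 1 0 0)) * (C35) + ((r 1 2 2 0)) * (h1 1 1 0 0) + ((((-1)/2)*r 0 2 1 2)) * (h1 2 0 2 0) + ((-r 0 2 1 0 + r 2 2 1 2)) * (h1 2 0 0 0) + ((r 0 2 2 0 - r 2 2 0 0)) * (h1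 2 0 1 2) + ((r 1 0 2 0)) * (C02) + ((-r 0 0 1 0)) * (h1 2 1 1 2) + ((-r 1 2 2 0)) * (C04) + ((-r 0 0 2 0)) * (h1 2 2 1 2) + ((-r 0 2 1 0)) * (h1 2 2 2 0) + ((r 0 2 1 0)) * (C68)
  have Y18 := h2 0 0 1 2 2 1 (by decide) (by decide)
  rw [Fin.sum_univ_three] at Y18
  have G18 : (r 0 0 1 0*r 0 2 2 1 - r 0 0 2 0*r 0 2 1 1 - r 0 1 2 0*r 1 2 2 2 - r 0 2 1 0*r 1 1 2 1 + r 0 2 1 1*r 1 1 2 0 + r 0 2 2 1*r 1 2 2 0) = 0 := by linear_combination Y18 + ((r 2 0 1 2)) * (h1 0 1 0 0) + ((-r 1 0 2 1)) * (h1 0 2 0 0) + ((-r 1 0 2 1 - r 2 0 0 0)) * (C15) + ((r 0 2 2 1)) * (h1 1 0 0 0) + ((r 1 2 2 1 + r 2 1 1 2)) * (h1 1 1 0 0) + ((-r 1 1 2 1 + r 2 2 2 1)) * (h1 1 2 0 0) + ((r 0 1 2 1)) * (C35) + ((-r 2 1 0 0)) * (C45) + ((-r 0 2 1 2)) * (C67)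 + ((r 2 2 1 2)) * (h1 2 1 0 0) + ((r 0 2 2 1)) * (h1 2 0 1 2) + ((-r 0 1 1 0 - r 2 2 0 0)) * (h1 2 1 1 2) + ((-r 2 0 1 2)) * (C01) + ((r 1 0 2 1)) * (C02) + ((-r 0 2 1 1)) * (h1 2 0 0 0) + ((-r 0 2 1 1)) * (C37) + ((-r 1 2 2 1 - r 2 1 1 2)) * (C04) + ((r 1 1 2 1 - r 2 2 2 1)) * (C05) + ((-r 2 2 1 2)) * (C07) + ((-r 0 1 2 0)) * (h1 2 2 1 2) + ((-r 0 2 1 0)) * (h1 2 2 2 1) + ((r 0 2 1 0)) * (C78)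
  have Y19 := h2 0 0 2 0 2 2 (by decide) (by decide)
  rw [Fin.sum_univ_three] at Y19
  have G19 : (r 0 1 2 0*r 1 2 2 0 - r 0 2 2 1*r 1 0 2 0) = 0 := by linear_combination Y19 + ((r 2 0 2 0)) * (h1 0 2 0 0) + ((((-1)/2)*r 2 0 2 2)) * (h1 0 0 0 0) + ((-r 2 2 2 2)) * (h1 2 0 0 0) + ((r 2 0 0 0)) * (C08) + ((-r 0 1 2 0 + r 2 1 0 0)) * (C38) + ((r 2 1 2 0)) * (h1 1 2 0 0) + ((-r 2 1 2 2)) * (h1 1 0 0 0) + ((r 1 0 2 0)) * (C18) + ((-r 0 2 2 0 + r 2 2 0 0)) * (C68) + (((1/2)*r 0 2 2 2)) * (h1 2 0 2 0) + ((-r 2 0 2 0)) * (C02) + ((-r 2 1 2 0)) * (C05) + ((r 0 0 1 0)) * (C78) + (((1/2)*r 0 0 2 0)) * (h1 2 2 2 2) + ((-r 0 2 1 0)) * (h1 2 1 2 0) + ((r 0 2 1 0)) * (C67)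
  have Y20 := h2 0 0 2 1 2 2 (by decide) (by decide)
  rw [Fin.sum_univ_three] at Y20
  have G20 : ((1/2)*α*r 0 1 2 0 + r 0 1 2 1*r 1 2 2 0 - r 0 2 2 1*r 1 1 2 0) = 0 := by linear_combination Y20 + ((r 2 0 2 1)) * (h1 0 2 0 0) + ((-r 2 0 2 2)) * (h1 0 1 0 0) + ((r 1 0 2 1 + r 2 0 0 0)) * (C18) + ((-r 0 1 2 1)) * (C38) + ((r 2 1 2 1)) * (h1 1 2 0 0) + ((-r 2 1 2 2)) * (h1 1 1 0 0) + (((1/2)*α - r 2 2 2 2)) * (h1 2 1 0 0) + ((r 2 1 0 0)) * (C48) + ((-r 0 2 2 1)) * (C68) + ((r 0 2 2 2)) * (C67) + ((r 0 1 1 0 + r 2 2 0 0)) * (C78) + ((-r 2 0 2 1)) * (C02) + ((r 2 0 2 2)) * (C01) + ((-r 2 1 2 1)) * (C05) + ((r 2 1 2 2)) * (C04) + ((r 0 2 2 1)) * (C37) + ((((-1)/2)*α + r 2 2 2 2)) * (C07) + ((((-1)/2)*r 0 2 1 0)) * (h1 2 1 2 1) + (((1/2)*r 0 1 2 0)) *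 (h1 2 2 2 2)
  have Y21 := h2 0 1 0 2 1 1 (by decide) (by decide)
  rw [Fin.sum_univ_three] at Y21
  have G21 : (((-1)/4)*α + ((-3)/2)*r 0 1 1 0 - r 0 1 2 1*r 0 2 1 2 + r 0 2 1 1*r 0 2 2 1 + ((-1)/2)*r 1 2 2 1) = 0 := by linear_combination Y21 + ((-r 0 1 1 1)) * (C02) + (((1/2)*r 1 0 0 2 + (1/2)*r 1 2 1 1)) * (h1 0 1 0 1) + ((r 0 1 0 2 - r 0 2 0 1)) * (C04) + ((2*r 0 1 1 0 - r 1 0 0 1 - r 1 1 1 1 - r 2 2 1 1)) * (C12) + ((r 0 2 1 1)) * (C01) + ((-r 0 1 1 1 - r 2 1 0 2)) * (h1 1 2 0 1) + ((r 0 1 1 1)) * (h1 1 1 0 2) + ((((-1)/2)*r 2 1 1 1)) * (h1 0 2 0 2) + ((r 2 1 0 1)) * (h1 1 2 0 2) + ((-r 0 2 1 1)) * (h1 2 2 0 1) + ((2*r 0 2 1 1)) * (h1 2 1 0 2) + ((-r 0 1 1 0 + r 2 2 1 1)) * (h1 0 2 0 1) + ((((-1)/2))) * (h1 1 0 0 1)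 + ((((-1)/4))) * (h1 1 1 1 1) + ((r 0 1 1 1 + r 2 1 0 2)) * (C15) + ((-r 0 2 1 2)) * (h1 2 1 0 1) + ((r 0 2 1 1)) * (C18) + ((((-1)/2))) * (h1 2 2 1 1) + (((1/2))) * (C48)
  have Y22 := h2 0 1 0 2 2 1 (by decide) (by decide)
  rw [Fin.sum_univ_three] at Y22
  have G22 : (-r 0 1 1 1*r 0 2 2 1 + ((-3)/2)*r 0 1 2 0 + r 0 1 2 1*r 0 2 1 1 - r 0 1 2 1*r 0 2 2 2 + r 0 2 2 1*r 0 2 2 1 + (1/2)*r 1 1 2 1) = 0 := by linear_combination Y22 + ((-r 0 1 2 1)) * (C02) + (((1/2)*r 1 2 2 1 + (1/2)*r 2 0 0 2)) * (h1 0 1 0 1) + ((r 0 1 0 2 - r 0 2 0 1)) * (C07) + ((2*r 0 1 2 0 - r 1 1 2 1 - r 2 0 0 1 - r 2 2 2 1)) * (C12) + ((r 0 2 2 1)) * (C01) + ((r 2 1 0 2)) * (h1 1 1 0 1) + ((-r 0 1 2 1)) * (h1 1 2 0 1) + ((r 0 1 2 1 - r 2 1 0 1)) * (h1 1 1 0 2)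 + ((((-1)/2)*r 2 1 2 1)) * (h1 0 2 0 2) + ((r 0 2 1 1 + r 2 2 0 2)) * (h1 2 1 0 1) + ((-r 0 1 1 1 + r 0 2 2 1 - r 2 2 0 1)) * (h1 2 1 0 2) + ((-r 0 1 2 0 + r 2 2 2 1)) * (h1 0 2 0 1) + ((((-1)/2))) * (h1 2 0 0 1) + ((r 0 1 2 1)) * (C15) + ((-r 0 1 2 1)) * (h1 2 2 0 2) + ((((-1)/2))) * (h1 2 2 2 1) + (((1/2))) * (C78)
  have Y23 := h2 0 1 0 2 2 2 (by decide) (by decide)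
  rw [Fin.sum_univ_three] at Y23
  have G23 : ((1/4)*α + r 0 1 2 1*r 0 2 1 2 - r 0 2 1 1*r 0 2 2 1 + ((-3)/2)*r 0 2 2 0 + (1/2)*r 1 2 2 1) = 0 := by linear_combination Y23 + ((-r 0 1 2 2)) * (C02) + ((-r 0 2 2 0 + r 2 0 0 2 + r 2 2 2 2)) * (h1 0 2 0 1) + ((r 0 1 0 2 - r 0 2 0 1)) * (C08) + ((((-1)/2)*r 2 0 0 1 + ((-1)/2)*r 2 1 2 2)) * (h1 0 2 0 2) + ((r 0 2 2 2)) * (C01) + ((2*r 0 2 2 0 - r 1 1 2 2 - r 2 0 0 2 - r 2 2 2 2)) * (C12) + ((-r 0 2 2 1 + r 2 1 0 2)) * (h1 1 2 0 1) + ((r 0 2 2 2 + r 1 1 0 2 - r 1 2 0 1)) * (C18) + ((-r 2 1 0 1)) * (h1 1 2 0 2) + (((1/2)*r 1 2 2 2)) * (h1 0 1 0 1) + ((-r 0 2 2 2)) * (h1 2 2 0 1) + ((-r 0 2 1 1 + r 0 2 2 2)) * (h1 2 1 0 2) + ((((-1)/2))) * (C48) + ((r 0 2 2 1 - r 2 1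 0 2)) * (C15) + ((r 0 2 2 1)) * (h1 1 1 0 2) + ((r 0 2 1 2)) * (h1 2 1 0 1) + ((((-1)/2))) * (h1 2 0 0 2) + ((((-1)/4))) * (h1 2 2 2 2)
  have Y24 := h2 0 1 1 0 1 1 (by decide) (by decide)
  rw [Fin.sum_univ_three] at Y24
  have G24 : (r 0 0 1 0*r 0 1 1 1 - r 0 1 1 0*r 0 1 1 0 - r 0 2 1 0*r 1 1 2 1 + r 0 2 1 1*r 1 1 2 0) = 0 := by linear_combination Y24 + (((1/2)*r 1 0 1 0)) * (h1 0 1 0 1) + ((-r 1 0 1 1)) * (C01) + ((r 0 1 1 0 + r 1 0 0 1)) * (C04) + ((-r 1 1 1 1)) * (h1 1 0 0 1) + ((r 0 1 1 1)) * (h1 1 1 1 0) + ((-r 0 1 1 1 + r 1 1 0 1)) * (C34) + ((-r 0 2 1 0)) * (h1 2 1 1 1) + ((r 2 1 0 1)) * (h1 1 2 1 0) + ((-r 2 0 0 1)) * (h1 1 2 1 1) + ((2*r 0 2 1 1)) * (h1 2 1 1 0) + ((r 2 0 1 1 - r 2 1 1 0)) * (h1 1 2 0 1) + ((-r 2 1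 0 1)) * (C35) + ((r 2 0 0 1)) * (C45) + (((-2)*r 0 2 1 1)) * (C37) + ((-r 2 0 1 1 + r 2 1 1 0)) * (C15) + ((-r 0 2 1 1)) * (h1 2 0 1 1)
  have Y25 := h2 0 1 1 0 1 2 (by decide) (by decide)
  rw [Fin.sum_univ_three] at Y25
  have G25 : (r 0 0 1 0*r 0 2 1 1 - r 0 1 1 0*r 0 2 1 0 - r 0 2 1 0*r 1 2 2 1 + r 0 2 1 2*r 1 1 2 0) = 0 := by linear_combination Y25 + ((-r 0 0 1 0 + r 1 1 1 0 - r 2 0 1 2 + r 2 2 1 0)) * (C15) + ((r 1 0 1 0)) * (h1 0 2 0 1) + ((-r 1 0 1 2)) * (C01) + ((r 0 1 1 0 + r 1 0 0 1)) * (C05) + ((-r 1 1 1 2)) * (h1 1 0 0 1) + ((r 0 2 1 1 + r 1 2 0 1)) * (h1 1 1 1 0) + ((-r 1 2 1 0)) * (h1 1 1 0 1) + ((-r 0 1 1 1 + r 1 1 0 1 - r 2 2 0 1)) * (C35) + ((-r 0 2 1 0)) * (h1 2 1 1 2) + ((r 0 1 1 1 + r 2 2 0 1)) * (h1 1 2 1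 0) + ((((-1)/2)*r 2 0 0 1)) * (h1 1 2 1 2) + ((r 0 2 1 2)) * (h1 2 1 1 0) + ((r 2 0 1 2 - r 2 2 1 0)) * (h1 1 2 0 1) + ((-r 1 0 1 0)) * (C12) + ((-r 0 2 1 1 - r 1 2 0 1)) * (C34) + ((-r 0 2 1 2)) * (C37) + ((((-1)/4))) * (h1 1 0 1 0) + ((r 0 2 1 1)) * (h1 2 2 1 0) + ((-r 0 2 1 1)) * (h1 2 0 1 2) + ((-r 0 2 1 1)) * (C38)
  have Y26 := h2 0 1 1 0 2 0 (by decide) (by decide)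
  rw [Fin.sum_univ_three] at Y26
  have G26 : (-r 0 1 1 0*r 1 1 2 0 + r 0 1 1 1*r 1 0 2 0 + (-2)*r 0 1 2 0*r 1 2 2 0 + r 0 2 2 0*r 1 1 2 0 + r 0 2 2 1*r 1 0 2 0) = 0 := by linear_combination Y26 + ((-r 1 0 2 0 + r 2 0 1 0)) * (C01) + ((-r 0 0 1 0 - r 1 2 2 0 + r 2 2 1 0)) * (h1 2 0 0 1) + ((r 0 0 2 0 - r 1 1 2 0 + r 2 1 1 0)) * (h1 1 0 0 1) + ((r 0 1 2 0)) * (h1 1 1 1 0) + ((((-1)/2)*r 2 1 0 1)) * (h1 1 0 1 0) + ((r 1 0 2 0)) * (h1 1 1 0 1) + ((-r 0 2 1 0)) * (h1 2 1 2 0) + ((-r 0 1 1 0 + r 0 2 2 0)) * (h1 2 1 1 0) + ((-r 2 2 0 1)) * (h1 2 0 1 0) + ((r 2 0 2 0)) * (h1 1 2 0 1) + ((-r 0 1 2 0)) * (C34) + ((r 0 2 1 0)) * (C67) + ((-r 0 1 2 0)) * (h1 2 2 1 0) + ((r 0 1 1 0 - r 0 2 2 0)) * (C37) + ((r 1 0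 2 0)) * (h1 2 2 0 1) + ((-r 2 0 2 0)) * (C15) + ((r 0 1 2 0)) * (C38) + ((-r 1 0 2 0)) * (C18) + ((((-1)/2)*r 0 2 1 1)) * (h1 2 0 2 0)
  have Y27 := h2 0 1 1 0 2 1 (by decide) (by decide)
  rw [Fin.sum_univ_three] at Y27
  have G27 : (r 0 0 1 0*r 0 1 2 1 - r 0 1 1 0*r 0 1 2 0 - r 0 1 2 0*r 1 2 2 1 - r 0 1 2 1*r 1 2 2 0 + 2*r 0 2 2 1*r 1 1 2 0) = 0 := by linear_combination Y27 + (((1/2)*r 2 0 1 0)) * (h1 0 1 0 1) + ((-r 1 0 2 1)) * (C01) + ((r 0 1 1 0 + r 1 0 0 1)) * (C07) + ((-r 0 1 1 0 - r 1 2 2 1)) * (h1 2 0 0 1) + ((r 1 1 2 0 + r 2 1 1 0)) * (h1 1 1 0 1) + ((r 0 1 2 0 - r 1 1 2 1)) * (h1 1 0 0 1) + ((r 0 1 2 1 - r 2 1 0 1)) * (h1 1 1 1 0) + ((r 0 1 1 1 - r 0 2 2 1 + r 1 1 0 1 + r 2 2 0 1)) * (C37) + ((((-1)/2)*r 0 2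 1 0)) * (h1 2 1 2 1) + ((r 2 2 1 0)) * (h1 2 1 0 1) + ((-r 0 1 1 1 + r 0 2 2 1 - r 2 2 0 1)) * (h1 2 1 1 0) + ((r 2 0 2 1)) * (h1 1 2 0 1) + ((-r 0 1 2 1 + r 2 1 0 1)) * (C34) + ((-r 0 1 2 1)) * (h1 2 2 1 0) + ((-r 2 0 2 1)) * (C15) + ((r 0 1 2 1)) * (C38) + ((r 1 1 2 0)) * (h1 2 2 0 1) + ((-r 0 2 1 1)) * (C67) + ((-r 1 1 2 0)) * (C18)
  have Y28 := h2 0 1 1 1 1 2 (by decide) (by decide)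
  rw [Fin.sum_univ_three] at Y28
  have G28 : ((1/2)*α*r 0 2 1 1 + r 0 1 1 0*r 0 2 1 1 - r 0 1 1 1*r 0 2 1 0 - r 0 2 1 1*r 1 2 2 1 + r 0 2 1 2*r 1 1 2 1) = 0 := by linear_combination Y28 + ((-r 0 1 1 2)) * (C04) + ((r 1 0 1 1)) * (h1 0 2 0 1) + ((((-1)/2)*r 1 0 1 2)) * (h1 0 1 0 1) + ((r 0 1 1 1)) * (C05) + ((-r 0 1 1 0 + r 1 0 0 1 + r 1 1 1 1 - r 2 1 1 2 + r 2 2 1 1)) * (C15) + (((-2)*r 0 1 1 1 - r 2 2 0 1)) * (C45) + (((1/2)*r 0 2 1 1 + (1/2)*r 1 2 0 1)) * (h1 1 1 1 1) + ((-r 1 2 1 1)) * (h1 1 1 0 1) + (((-2)*r 0 2 1 1)) * (h1 2 1 1 2) + ((r 0 1 1 1 + r 2 2 0 1)) * (h1 1 2 1 1) + ((((-1)/2)*r 2 1 0 1)) * (h1 1 2 1 2) + ((r 0 2 1 2)) * (h1 2 1 1 1) + ((r 2 1 1 2 - r 2 2 1 1)) * (h1 1 2 0 1) + ((-r 1 0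 1 1)) * (C12) + ((((-1)/2))) * (C34) + ((r 0 2 1 1)) * (h1 2 2 1 1) + ((-r 0 2 1 1)) * (C48)
  have Y29 := h2 0 1 1 1 2 0 (by decide) (by decide)
  rw [Fin.sum_univ_three] at Y29
  have G29 : (((-1)/2)*α*r 0 1 2 0 - r 0 0 2 0*r 0 1 1 1 + r 0 1 1 0*r 0 1 2 0 - r 0 1 1 0*r 1 1 2 1 + r 0 1 1 1*r 1 1 2 0 - r 0 1 2 0*r 1 2 2 1 - r 0 1 2 1*r 1 2 2 0 + r 0 2 2 0*r 1 1 2 1 + r 0 2 2 1*r 1 1 2 0) = 0 := by linear_combination Y29 + ((-r 0 1 2 0 - r 2 0 0 1)) * (C04) + ((r 2 0 1 1)) * (C01) + ((((-1)/2)*r 1 0 2 0)) * (h1 0 1 0 1) + ((r 0 1 2 0 + r 2 1 1 1)) * (h1 1 0 0 1) + (((1/2)*r 0 1 2 0)) * (h1 1 1 1 1) + ((-r 2 1 0 1)) * (C34) + (((-2)*r 0 2 1 1)) * (h1 2 1 2 0) + ((-r 0 1 1 0 + r 2 2 1 1)) * (h1 2 0 0 1) + ((-r 1 2 2 0)) *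 (h1 2 1 0 1) + ((-r 0 1 1 0 + r 0 2 2 0)) * (h1 2 1 1 1) + ((-r 2 2 0 1)) * (h1 2 0 1 1) + ((r 2 1 2 0)) * (h1 1 2 0 1) + ((2*r 0 2 1 1)) * (C67) + ((-r 0 1 2 0)) * (h1 2 2 1 1) + ((r 1 1 2 0)) * (h1 2 2 0 1) + ((-r 2 1 2 0)) * (C15) + ((r 0 1 2 0)) * (C48) + ((-r 1 1 2 0)) * (C18)
  have Y30 := h2 0 1 1 1 2 1 (by decide) (by decide)
  rw [Fin.sum_univ_three] at Y30
  have G30 : (((-1)/2)*α*r 0 1 2 1 + 2*r 0 1 1 0*r 0 1 2 1 + (-2)*r 0 1 1 1*r 0 1 2 0 + (-2)*r 0 1 2 1*r 1 2 2 1 + 2*r 0 2 2 1*r 1 1 2 1) = 0 := by linear_combination Y30 + ((-r 0 1 2 1)) * (C04) + ((((-1)/2)*r 1 0 2 1 + (1/2)*r 2 0 1 1)) * (h1 0 1 0 1) + ((r 0 1 1 1)) * (C07) + ((-r 0 1 1 1)) * (h1 2 0 0 1) + ((r 0 1 2 1)) * (h1 1 0 0 1) + ((r 2 1 1 1)) *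 (h1 1 1 0 1) + (((1/2)*r 0 1 2 1 + ((-1)/2)*r 2 1 0 1)) * (h1 1 1 1 1) + ((-r 0 2 1 1)) * (h1 2 1 2 1) + ((-r 1 2 2 1 + r 2 2 1 1)) * (h1 2 1 0 1) + ((-r 0 1 1 1 + r 0 2 2 1 - r 2 2 0 1)) * (h1 2 1 1 1) + ((r 2 1 2 1)) * (h1 1 2 0 1) + ((-r 0 1 2 1)) * (h1 2 2 1 1) + ((r 1 1 2 1)) * (h1 2 2 0 1) + ((-r 2 1 2 1)) * (C15) + ((r 0 1 2 1)) * (C48) + ((-r 1 1 2 1)) * (C18)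
  have Y31 := h2 0 1 1 1 2 2 (by decide) (by decide)
  rw [Fin.sum_univ_three] at Y31
  have G31 : ((1/2)*α*r 0 1 1 1 + 2*r 0 1 1 0*r 0 2 2 1 - r 0 1 1 1*r 0 2 2 0 + r 0 1 1 1*r 1 2 2 1 - r 0 1 2 0*r 0 2 1 1 - r 0 1 2 1*r 1 2 2 2 - r 0 2 1 1*r 1 1 2 1 + r 0 2 2 2*r 1 1 2 1 + ((-1)/2)*r 1 1 2 0) = 0 := by linear_combination Y31 + ((-r 0 1 2 2)) * (C04) + ((r 2 0 1 1)) * (h1 0 2 0 1) + ((((-1)/2)*r 1 0 2 2)) * (h1 0 1 0 1) + ((r 0 1 1 1)) * (C08) + ((-r 0 2 1 1)) * (h1 2 0 0 1) + ((-r 0 1 1 0 + r 1 0 0 1 + r 1 1 1 1)) * (C18) + ((-r 0 1 1 1)) * (C48) + ((r 2 1 1 1 + r 2 1 2 2)) * (h1 1 2 0 1) + ((-r 2 1 0 1)) * (h1 1 2 1 1) + (((-2)*r 0 2 1 1)) * (C78) + ((-r 1 2 2 2)) * (h1 2 1 0 1) + ((-r 0 2 1 1 + r 0 2 2 2)) *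 (h1 2 1 1 1) + ((-r 2 0 1 1)) * (C12) + ((r 0 2 2 1)) * (h1 1 0 0 1) + ((-r 2 1 1 1 - r 2 1 2 2)) * (C15) + (((1/2)*r 0 2 2 1)) * (h1 1 1 1 1) + ((r 2 1 0 1)) * (C45) + ((((-1)/2))) * (h1 2 0 1 1)
  have Y32 := h2 0 1 1 2 2 0 (by decide) (by decide)
  rw [Fin.sum_univ_three] at Y32
  have G32 : (-r 0 0 2 0*r 0 2 1 1 + r 0 1 1 0*r 0 2 2 0 - r 0 1 1 0*r 1 2 2 1 + r 0 1 1 1*r 1 2 2 0 - r 0 1 2 0*r 1 2 2 2 + r 0 2 2 0*r 1 2 2 1 + ((-1)/2)*r 1 0 2 0) = 0 := by linear_combination Y32 + ((-r 0 1 2 0 - r 2 0 0 1)) * (C05) + ((r 2 0 1 2)) * (C01) + ((-r 1 0 2 0)) * (h1 0 2 0 1) + ((r 0 0 2 0 - r 2 2 2 0)) * (C15) + ((r 0 2 2 0 + r 2 1 1 2)) * (h1 1 0 0 1) + ((-r 1 1 2 0 + r 2 2 2 0)) * (h1 1 2 0 1) + ((r 0 1 2 0)) * (C45) + ((-r 2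 1 0 1)) * (C35) + ((r 1 2 2 0)) * (h1 1 1 0 1) + ((-r 0 2 1 2)) * (h1 2 1 2 0) + ((-r 0 2 1 0 + r 2 2 1 2)) * (h1 2 0 0 1) + ((-r 0 1 1 0 + r 0 2 2 0)) * (h1 2 1 1 2) + ((-r 2 2 0 1)) * (h1 2 0 1 2) + ((r 1 0 2 0)) * (C12) + ((r 0 2 1 2)) * (C67) + ((-r 0 1 2 0)) * (h1 2 2 1 2) + ((-r 0 2 1 1)) * (h1 2 2 2 0) + ((r 0 2 1 1)) * (C68)
  have Y33 := h2 0 1 1 2 2 1 (by decide) (by decide)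
  rw [Fin.sum_univ_three] at Y33
  have G33 : (r 0 1 1 0*r 0 2 2 1 + (-2)*r 0 1 2 0*r 0 2 1 1 + r 0 1 2 1*r 0 2 1 0 - r 0 1 2 1*r 1 2 2 2 + r 0 2 2 1*r 1 2 2 1 + ((-1)/2)*r 1 1 2 0) = 0 := by linear_combination Y33 + ((-r 0 1 2 1)) * (C05) + (((1/2)*r 2 0 1 2)) * (h1 0 1 0 1) + ((-r 1 0 2 1)) * (h1 0 2 0 1) + ((r 0 1 1 2)) * (C07) + ((r 0 1 2 0 - r 2 0 0 1 - r 2 2 2 1)) * (C15) + ((r 0 2 2 1)) * (h1 1 0 0 1) + ((r 1 2 2 1 + r 2 1 1 2)) * (h1 1 1 0 1) + ((-r 1 1 2 1 + r 2 2 2 1)) * (h1 1 2 0 1) + ((r 0 1 2 1 - r 2 1 0 1)) * (C45) + ((((-1)/2)*r 0 2 1 2)) * (h1 2 1 2 1) + ((r 2 2 1 2)) * (h1 2 1 0 1) + ((-r 0 1 1 1 + r 0 2 2 1 - r 2 2 0 1)) * (h1 2 1 1 2) + ((r 1 0 2 1)) * (C12) + ((-r 0 2 1 1)) * (h1 2 0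 0 1) + ((-r 0 1 2 1)) * (h1 2 2 1 2) + (((1/2))) * (C37) + ((-r 0 2 1 1)) * (h1 2 2 2 1) + ((r 0 2 1 1)) * (C78)
  have Y34 := h2 0 1 1 2 2 2 (by decide) (by decide)
  rw [Fin.sum_univ_three] at Y34
  have G34 : (r 0 1 1 0*r 0 2 2 2 + r 0 1 1 1*r 1 2 2 2 - r 0 1 2 0*r 0 2 1 2 + r 0 2 1 0*r 0 2 2 1 - r 0 2 1 1*r 0 2 2 0 - r 0 2 1 1*r 1 2 2 1 - r 0 2 2 1*r 1 2 2 2 + r 0 2 2 2*r 1 2 2 1 - r 1 2 2 0) = 0 := by linear_combination Y34 + ((-r 0 1 2 2)) * (C05) + ((-r 1 0 2 2 + r 2 0 1 2)) * (h1 0 2 0 1) + ((r 0 1 1 2)) * (C08) + ((-r 0 2 1 2)) * (h1 2 0 0 1) + ((r 0 2 2 2)) * (h1 1 0 0 1) + (((1/2)*α + r 0 2 2 0 - r 1 1 2 2 + r 1 2 2 1 - r 2 1 1 2 - r 2 2 2 2)) * (C15) + ((((-1)/2)*α - r 1 2 2 1 + r 2 1 1 2 + r 2 2 2 2)) * (h1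 1 2 0 1) + ((-r 0 2 1 1 - r 1 2 0 1)) * (C48) + ((-r 0 2 1 0 + r 1 1 1 2 + r 1 2 2 2)) * (C18) + ((((-1)/2)*r 2 1 0 1)) * (h1 1 2 1 2) + ((r 1 2 2 2)) * (h1 1 1 0 1) + ((-r 0 2 1 2)) * (C78) + ((-r 1 2 2 2)) * (h1 2 2 0 1) + ((-r 0 2 1 1 + r 0 2 2 2)) * (h1 2 1 1 2) + ((r 1 0 2 2 - r 2 0 1 2)) * (C12) + ((r 0 2 2 1)) * (C45) + ((((-1)/2))) * (h1 2 0 1 2) + (((1/2))) * (C38) + ((((-1)/2)*r 0 2 1 1)) * (h1 2 2 2 2)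
  have Y35 := h2 0 1 2 1 2 2 (by decide) (by decide)
  rw [Fin.sum_univ_three] at Y35
  have G35 : (α*r 0 1 2 1 + r 0 1 2 0*r 0 2 2 1 - r 0 1 2 1*r 0 2 2 0 + r 0 1 2 1*r 1 2 2 1 - r 0 2 2 1*r 1 1 2 1) = 0 := by linear_combination Y35 + ((-r 0 1 2 2)) * (C07) + ((r 2 0 2 1)) * (h1 0 2 0 1) + ((((-1)/2)*r 2 0 2 2)) * (h1 0 1 0 1) + ((r 0 1 2 1)) * (C08) + ((-r 0 1 2 0 + r 1 1 2 1 + r 2 0 0 1)) * (C18) + ((-r 0 1 2 1 + r 2 1 0 1)) * (C48) + ((r 2 1 2 1)) * (h1 1 2 0 1) + ((-r 2 1 2 2)) * (h1 1 1 0 1) + (((1/2)*α - r 2 2 2 2)) * (h1 2 1 0 1) + ((r 0 1 1 1 - r 0 2 2 1 + r 2 2 0 1)) * (C78) + ((((-1)/2)*r 0 2 1 1 + (1/2)*r 0 2 2 2)) * (h1 2 1 2 1) + ((-r 2 0 2 1)) * (C12) + ((-r 2 1 2 1)) * (C15) + (((1/2)*r 0 1 2 1)) * (h1 2 2 2 2)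 + ((((-1)/2))) * (C67)
  have Y36 := h2 0 2 1 0 2 0 (by decide) (by decide)
  rw [Fin.sum_univ_three] at Y36
  have G36 : (r 0 1 1 0*r 1 2 2 0 + (-2)*r 0 2 1 0*r 1 1 2 0 + r 0 2 1 1*r 1 0 2 0 - r 0 2 2 0*r 1 2 2 0 + r 0 2 2 2*r 1 0 2 0) = 0 := by linear_combination Y36 + ((-r 1 0 2 0 + r 2 0 1 0)) * (C02) + ((-r 0 0 1 0 - r 1 2 2 0 + r 2 2 1 0)) * (h1 2 0 0 2) + ((r 0 0 2 0 - r 1 1 2 0 + r 2 1 1 0)) * (h1 1 0 0 2) + ((r 0 1 2 0)) * (h1 1 2 1 0) + ((((-1)/2)*r 2 1 0 2)) * (h1 1 0 1 0) + ((r 1 0 2 0)) * (h1 1 1 0 2) + ((-r 0 2 1 0)) * (h1 2 2 2 0) + ((-r 2 2 0 2)) * (h1 2 0 1 0) + ((r 2 0 2 0)) * (h1 1 2 0 2) + ((-r 0 2 1 0)) * (h1 2 1 1 0) + ((-r 0 1 2 0)) * (C35) + ((r 0 2 1 0)) * (C68) + ((r 1 0 2 0)) * (h1 2 2 0 2) +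 ((((-1)/2)*r 0 2 1 2)) * (h1 2 0 2 0) + ((r 0 2 1 0)) * (C37)
  have Y37 := h2 0 2 1 2 2 0 (by decide) (by decide)
  rw [Fin.sum_univ_three] at Y37
  have G37 : (-r 0 0 2 0*r 0 2 1 2 + r 0 2 1 0*r 0 2 2 0 - r 0 2 1 0*r 1 2 2 1 + 2*r 0 2 1 1*r 1 2 2 0 - r 0 2 1 2*r 1 1 2 0) = 0 := by linear_combination Y37 + ((-r 0 2 2 0 - r 2 0 0 2)) * (C05) + ((r 2 0 1 2)) * (C02) + ((((-1)/2)*r 1 0 2 0)) * (h1 0 2 0 2) + ((r 0 2 2 0 + r 2 1 1 2)) * (h1 1 0 0 2) + ((-r 1 2 2 0)) * (C15) + ((-r 1 1 2 0 + r 2 2 2 0)) * (h1 1 2 0 2) + (((1/2)*r 0 1 2 0)) * (h1 1 2 1 2) + ((-r 2 1 0 2)) * (C35) + ((r 1 2 2 0)) * (h1 1 1 0 2) + (((-2)*r 0 2 1 2)) * (h1 2 2 2 0) + ((-r 0 2 1 0 + r 2 2 1 2)) * (h1 2 0 0 2) + ((-r 2 2 0 2)) * (h1 2 0 1 2) + ((-r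 0 2 1 0)) * (h1 2 1 1 2) + ((2*r 0 2 1 2)) * (C68)
  have Y38 := h2 0 2 1 2 2 1 (by decide) (by decide)
  rw [Fin.sum_univ_three] at Y38
  have G38 : (-r 0 1 2 0*r 0 2 1 2 + 2*r 0 2 1 0*r 0 2 2 1 - r 0 2 1 1*r 0 2 2 0 + r 0 2 1 1*r 1 2 2 1 - r 0 2 1 2*r 1 1 2 1 + (1/2)*r 1 2 2 0) = 0 := by linear_combination Y38 + ((-r 0 2 2 1)) * (C05) + ((r 2 0 1 2)) * (C12) + ((((-1)/2)*r 1 0 2 1)) * (h1 0 2 0 2) + ((r 0 2 1 2)) * (C07) + ((-r 1 2 2 1 - r 2 0 0 2)) * (C15) + ((r 0 2 2 1)) * (h1 1 0 0 2) + ((r 1 2 2 1 + r 2 1 1 2)) * (h1 1 1 0 2) + ((-r 1 1 2 1 + r 2 2 2 1)) * (h1 1 2 0 2) + (((1/2)*r 0 1 2 1)) * (h1 1 2 1 2) + ((-r 2 1 0 2)) * (C45) + (((-2)*r 0 2 1 2)) * (h1 2 2 2 1) + ((r 2 2 1 2)) * (h1 2 1 0 2) + ((-r 0 2 1 1 - r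 2 2 0 2)) * (h1 2 1 1 2) + (((1/2))) * (h1 2 0 1 2) + ((-r 0 2 1 1)) * (h1 2 0 0 2) + ((2*r 0 2 1 2)) * (C78)
  have Y39 := h2 1 1 1 2 2 1 (by decide) (by decide)
  rw [Fin.sum_univ_three] at Y39
  have G39 : (r 0 1 1 1*r 1 2 2 0 - r 0 2 1 1*r 1 1 2 0 - r 1 1 2 1*r 1 2 2 2 + r 1 2 2 1*r 1 2 2 1) = 0 := by linear_combination Y39 + ((-r 0 1 2 1)) * (C35) + ((r 0 1 1 1)) * (h1 2 0 1 2) + ((r 1 0 2 1 - r 2 0 1 1)) * (C15) + ((r 0 2 2 1)) * (C34) + (((1/2)*r 1 2 2 1 + (1/2)*r 2 1 1 2)) * (h1 1 1 1 1) + ((-r 1 1 2 1 + r 2 2 2 1)) * (h1 1 2 1 1) + ((r 1 1 2 1 - r 2 1 1 1 - r 2 2 2 1)) * (C45) + ((((-1)/2)*r 2 1 2 1)) * (h1 1 2 1 2) + ((r 2 2 1 2)) * (h1 2 1 1 1) + ((r 1 2 2 1 - r 2 2 1 1)) * (h1 2 1 1 2) + ((-r 0 2 1 1)) * (h1 2 0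 1 1) + ((-r 1 1 2 1)) * (h1 2 2 1 2)
  have Y40 := h2 1 1 1 2 2 2 (by decide) (by decide)
  rw [Fin.sum_univ_three] at Y40
  have G40 : (((-1)/2)*α*r 1 2 2 2 + r 0 2 1 1*r 1 2 2 0 - r 0 2 1 2*r 1 1 2 0) = 0 := by linear_combination Y40 + ((-r 1 0 1 2)) * (C18) + ((r 0 2 1 1)) * (h1 2 0 1 2) + ((r 1 0 2 2)) * (C15) + ((-r 0 2 1 2)) * (h1 2 0 1 1) + ((r 0 2 2 2)) * (C34) + ((((-1)/2)*α - r 1 2 2 1 + r 2 1 1 2 + r 2 2 2 2)) * (h1 1 2 1 1) + ((-r 1 2 1 1 + r 1 2 2 2)) * (C48) + ((((-1)/2)*r 2 1 1 1 + ((-1)/2)*r 2 1 2 2)) * (h1 1 2 1 2) + (((1/2)*r 1 2 2 2)) * (h1 1 1 1 1) + ((-r 1 2 2 2)) * (h1 2 2 1 1) + ((r 1 2 2 2)) * (h1 2 1 1 2) + ((-r 0 2 2 1)) * (C35) + (((1/2)*α + r 1 2 2 1 - r 2 1 1 2 - r 2 2 2 2)) * (C45)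
  have hfin : α^3 = 0 := by linear_combination (((-36)*α)) * G0 + (((-24)*α*r 0 2 1 1 + 28*α*r 0 2 2 2 + (-144)*r 0 1 1 0*r 0 2 1 1 + 144*r 0 1 1 0*r 0 2 2 2 + (-96)*r 0 2 1 0*r 0 2 2 1 + (-72)*r 0 2 1 1*r 0 2 2 0 + (-72)*r 0 2 1 1*r 1 2 2 1 + (-72)*r 0 2 1 2*r 1 1 2 1 + (-168)*r 0 2 2 1*r 1 2 2 2 + 144*r 0 2 2 2*r 1 2 2 1 + 24*r 1 2 2 0)) * G1 + (((-8)*α*r 0 2 2 1 + (-48)*r 0 2 2 0*r 0 2 2 1 + 16*r 0 2 2 1*r 1 2 2 1)) * G2 + (((-36)*r 1 2 2 2)) * G3 + ((((-16)/3)*α*r 0 2 1 2 + (-32)*r 0 2 1 2*r 0 2 2 0 + (32/3)*r 0 2 1 2*r 1 2 2 1)) * G4 + (((-20)*α*r 0 2 1 1 + 24*α*r 0 2 2 2 + (-144)*r 0 1 1 0*r 0 2 1 1 + 144*r 0 1 1 0*r 0 2 2 2 + (-96)*r 0 2 1 0*r 0 2 2 1 + (-72)*r 0 2 1 1*r 0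 2 2 0 + (-72)*r 0 2 1 1*r 1 2 2 1 + (-72)*r 0 2 1 2*r 1 1 2 1 + (-168)*r 0 2 2 1*r 1 2 2 2 + 144*r 0 2 2 2*r 1 2 2 1)) * G5 + (((-38)*r 1 1 2 1)) * G6 + (((-24)*α*r 0 1 1 1 + (-108)*α*r 0 2 2 1 + (-144)*r 0 1 1 0*r 0 2 2 1 + 144*r 0 1 2 0*r 0 2 2 2 + 144*r 0 1 2 1*r 1 2 2 2 + 144*r 0 2 1 1*r 1 1 2 1 + (-216)*r 0 2 2 0*r 0 2 2 1 + 40*r 0 2 2 1*r 1 2 2 1 + (-144)*r 0 2 2 2*r 1 1 2 1)) * G7 + ((24*α)) * G8 + ((4*α*r 0 2 1 1)) * G9 + (((-24)*α*r 0 1 1 1 + (-96)*α*r 0 2 2 1 + (-144)*r 0 1 1 0*r 0 2 2 1 + 144*r 0 1 2 0*r 0 2 2 2 + 144*r 0 1 2 1*r 1 2 2 2 + 144*r 0 2 1 1*r 1 1 2 1 + (-168)*r 0 2 2 0*r 0 2 2 1 + 24*r 0 2 2 1*r 1 2 2 1 + (-144)*r 0 2 2 2*r 1 1 2 1)) * G10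 + ((48*r 0 1 1 1 + 368*r 0 2 2 1)) * G11 + ((96*r 0 2 2 2)) * G12 + ((24*r 0 1 1 1 + 124*r 0 2 2 1)) * G13 + (((-24)*r 0 2 2 2)) * G14 + (((-36)*r 1 2 2 2)) * G15 + (((-16)*α + (-144)*r 0 1 1 0 + (-72)*r 0 2 2 0 + (-72)*r 1 2 2 1)) * G16 + (((-24)*r 0 1 1 1 + (-172)*r 0 2 2 1)) * G17 + ((52*α + 72*r 0 1 1 0 + 36*r 0 2 2 0 + 36*r 1 2 2 1)) * G18 + ((48*r 0 2 2 2)) * G19 + ((24*r 0 2 1 0 + 60*r 1 2 2 2)) * G20 + (((-8)*α*r 0 2 2 0 + 8*α*r 1 2 2 1 + (-96)*r 0 1 1 1*r 1 2 2 0 + (-16)*r 0 2 2 1*r 1 2 2 0)) * G21 + ((4*α*r 1 2 2 2)) * G22 + ((4*α*α + 16*α*r 0 2 2 0 + (-96)*r 0 1 1 1*r 1 2 2 0 + (-16)*r 0 2 2 1*r 1 2 2 0)) * G23 + (((-36)*α)) * G24 + ((34*r 1 1 2 1)) * G25 + ((24*r 0 2 2 2)) * G26 + ((72*r 1 2 2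 2)) * G27 + ((8*α*r 0 2 2 1 + 48*r 0 2 2 0*r 0 2 2 1 + (-16)*r 0 2 2 1*r 1 2 2 1)) * G28 + ((36*r 1 2 2 2)) * G29 + ((((-8)/3)*α*r 0 2 1 2 + (-16)*r 0 2 1 2*r 0 2 2 0 + (16/3)*r 0 2 1 2*r 1 2 2 1)) * G30 + ((72*r 1 2 2 0)) * G31 + (((-12)*α)) * G32 + ((4*α*r 0 2 1 1 + (-4)*α*r 0 2 2 2 + (-48)*r 1 2 2 0)) * G33 + ((4*α*r 0 2 2 1)) * G34 + ((((-16)/3)*α*r 0 2 1 2 + (-32)*r 0 2 1 2*r 0 2 2 0 + (32/3)*r 0 2 1 2*r 1 2 2 1)) * G35 + (((-24)*r 0 1 1 1 + (-196)*r 0 2 2 1)) * G36 + ((2*r 1 1 2 1)) * G37 + ((8*α*r 0 2 2 1 + 48*r 0 2 2 0*r 0 2 2 1 + (-16)*r 0 2 2 1*r 1 2 2 1)) * G38 + ((4*α)) * G39 + (((-4)*r 1 1 2 1)) * G40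
  exact hα ((pow_eq_zero_iff three_ne_zero).mp hfin)
end

section
/- Let h be a finite-dimensional real Lie algebra and let r̃ : h* → h be a linear map that is antisymmetric, i.e. ⟨ξ, r̃(η)⟩ = −⟨η, r̃(ξ)⟩ for all ξ, η ∈ h*, and that satisfies condition (*): ⟨ξ, [r̃(η), r̃(ζ)]⟩ + ⟨η, [r̃(ζ), r̃(ξ)]⟩ + ⟨ζ, [r̃(ξ), r̃(η)]⟩ = 0 for all ξ, η, ζ ∈ h*. Then the image h₀ = r̃(h*) of r̃ is a Lie subalgebra of h; that is, for all ξ, η ∈ h* the bracket [r̃(ξ), r̃(η)] lies in the range of r̃. -/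
/-- For a finite-dimensional real Lie algebra `h` and an
antisymmetric linear map `r̃ : h* → h` satisfying condition (*), the image
`h₀ = r̃(h*)` is a Lie subalgebra of `h`: the bracket of any two elements of the
range of `r̃` lies in the range of `r̃`. -/
theorem stmt_5 (h : Type) [LieRing h] [LieAlgebra ℝ h] [FiniteDimensional ℝ h]
    (rt : Module.Dual ℝ h →ₗ[ℝ] h)
    (hanti : ∀ ξ η : Module.Dual ℝ h, ξ (rt η) = - η (rt ξ))
    (hstar : ∀ ξ η ζ : Module.Dual ℝ h,
        ξ ⁅rt η, rt ζ⁆ + η ⁅rt ζ, rt ξ⁆ + ζ ⁅rt ξ, rt η⁆ = 0) :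
    ∀ ξ η : Module.Dual ℝ h, ⁅rt ξ, rt η⁆ ∈ LinearMap.range rt := by
  intro ξ η
  by_contra hx
  obtain ⟨f, hf, hmap⟩ := (LinearMap.range rt).exists_dual_map_eq_bot_of_notMem hx inferInstance
  have hker : rt f = 0 := by
    rw [← Module.forall_dual_apply_eq_zero_iff ℝ]
    intro φ
    rw [hanti φ f]
    have : f (rt φ) = 0 := by
      have : f (rt φ) ∈ (LinearMap.range rt).map f :=
        Submodule.mem_map_of_mem (LinearMap.mem_range_self rt φ)
      rwa [hmap, Submodule.mem_bot] at this
    simp [this]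
  have := hstar ξ η f
  rw [hker] at this
  simp only [lie_zero, zero_lie, map_zero, zero_add] at this
  exact hf this
end

section
/- Let n ≥ 1 and let J² : Λ²(gl(n,ℝ)) → (ℝⁿ → Λ²(ℝⁿ)) be the linear map determined by J²(A ∧ B)(x) = (Aᵀx) ∧ (Bᵀx) for A, B ∈ gl(n,ℝ) and x ∈ ℝⁿ (equivalently, J²(E_{ij} ∧ E_{kl})(x) = x_i x_k (e_j ∧ e_l)). Then the kernel of J² has dimension n²(n²−1)/4. -/
open scoped Matrix

/-! J² sends `E_{pj} ∧ E_{ql}` to `x ↦ x_p x_q (e_j ∧ e_l)`, so its range is spanned by the fields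
`x ↦ m(x) • ω` with `m` a quadratic monomial (indexed by `Sym2 (Fin n)`) and `ω` a basis bivector.
These fields are linearly independent, since distinct monomials stay independent as polynomial
functions over the infinite field `ℝ`. Hence `rank J² = C(n+1,2) · C(n,2) = n²(n²-1)/4`, and
rank–nullity against `dim Λ²(gl(n,ℝ)) = C(n²,2) = n²(n²-1)/2` gives the kernel. -/

open ExteriorAlgebra

theorem Sym2.toMultiset_injective {α : Type*} :
    Function.Injective (Sym2.toMultiset : Sym2 α → Multiset α) := fun _ _ h =>
  Sym2.ext fun a => by rw [← Sym2.mem_toMultiset, h, Sym2.mem_toMultiset]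

def quadraticMonomial {ι R : Type*} [CommSemiring R] (z : Sym2 ι) : (ι → R) → R :=
  Sym2.lift ⟨fun i j x => x i * x j, fun i j => funext fun x => mul_comm (x i) (x j)⟩ z

@[simp]
theorem quadraticMonomial_mk {ι R : Type*} [CommSemiring R] (i j : ι) (x : ι → R) :
    quadraticMonomial s(i, j) x = x i * x j := rfl

theorem linearIndependent_quadraticMonomial {ι K : Type*} [Field K] [Infinite K] :
    LinearIndependent K (quadraticMonomial : Sym2 ι → (ι → K) → K) := by
  classical
  let evalₗ : MvPolynomial ι K →ₗ[K] (ι → K) → K :=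
    LinearMap.pi fun x => (MvPolynomial.aeval x).toLinearMap
  let P : Sym2 ι → MvPolynomial ι K := fun z =>
    MvPolynomial.monomial (Multiset.toFinsupp z.toMultiset) 1
  have hP : LinearIndependent K P :=
    (MvPolynomial.basisMonomials ι K).linearIndependent.comp _
      (Multiset.toFinsupp.injective.comp Sym2.toMultiset_injective)
  have heval : quadraticMonomial = evalₗ ∘ P := by
    funext z x
    induction z with | _ i j => ?_
    change x i * x j = MvPolynomial.aeval x (MvPolynomial.monomial
      (Multiset.toFinsupp ({i} + {j})) 1)
    rw [MvPolynomial.aeval_monomial, Multiset.toFinsupp_add, Multiset.toFinsupp_singleton,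
      Multiset.toFinsupp_singleton, Finsupp.prod_add_index' (fun _ => pow_zero _)
      (fun _ => pow_add _)]
    simp
  rw [heval]
  exact hP.map' evalₗ (LinearMap.ker_eq_bot.mpr fun p q h =>
    MvPolynomial.funext fun x => congrFun h x)

theorem LinearIndependent.const {K V : Type*} [Ring K] [AddCommGroup V] [Module K V]
    {β : Type*} {v : β → V} (hv : LinearIndependent K v) (X : Type*) :
    LinearIndependent (X → K) (fun b => Function.const X (v b)) := by
  rw [linearIndependent_iff'] at hv ⊢
  intro s g hg i hi
  funext x
  exact hv s (fun b => g b x) (by simpa using congrFun hg x) i hi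

theorem Matrix.transpose_single_one_mulVec {ι R : Type*} [Fintype ι] [DecidableEq ι]
    [Semiring R] (i j : ι) (x : ι → R) :
    (Matrix.single i j (1 : R))ᵀ *ᵥ x = x i • Pi.single j 1 := by
  rw [Matrix.transpose_single, Matrix.single_mulVec, one_mul, ← Pi.single_smul, smul_eq_mul,
    mul_one]
  rfl

theorem ExteriorAlgebra.ιMulti_two_smul {R M : Type*} [CommRing R] [AddCommGroup M]
    [Module R M] (a b : R) (u v : M) :
    ιMulti R 2 ![a • u, b • v] = (a * b) • ιMulti R 2 ![u, v] := by
  have := (ιMulti R 2).map_smul_univ ![a, b] ![u, v]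
  rwa [Fin.prod_univ_two, ← FinVec.etaExpand_eq (fun i => ![a, b] i • ![u, v] i)] at this

theorem apply_ιMulti_single_single {ι R : Type*} [Fintype ι] [DecidableEq ι] [CommRing R]
    (J : ⋀[R]^2 (Matrix ι ι R) →ₗ[R] ((ι → R) → ExteriorAlgebra R (ι → R)))
    (hJ : ∀ (A B : Matrix ι ι R) (x : ι → R),
      J (exteriorPower.ιMulti R 2 ![A, B]) x = ιMulti R 2 ![Aᵀ *ᵥ x, Bᵀ *ᵥ x])
    (i j k l : ι) :
    J (exteriorPower.ιMulti R 2 ![Matrix.single i j 1, Matrix.single k l 1])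
      = fun x => quadraticMonomial s(i, k) x • ιMulti R 2 ![Pi.single j 1, Pi.single l 1] := by
  funext x
  rw [hJ, Matrix.transpose_single_one_mulVec, Matrix.transpose_single_one_mulVec,
    ιMulti_two_smul, quadraticMonomial_mk]

section

variable {ι K : Type*} [LinearOrder ι] [Fintype ι]

noncomputable def quadraticBivector [CommRing K] (p : Sym2 ι × Set.powersetCard ι 2) :
    (ι → K) → ExteriorAlgebra K (ι → K) :=
  fun x => quadraticMonomial p.1 x • ιMulti_family K 2 (Pi.basisFun K ι) p.2

theorem linearIndependent_quadraticBivector [Field K] [Infinite K] :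
    LinearIndependent K (quadraticBivector (ι := ι) (K := K)) := by
  have hω : LinearIndependent K (ιMulti_family K 2 (Pi.basisFun K ι)) := by
    have := (exteriorPower.ιMulti_family_linearIndependent_ofBasis K 2 (Pi.basisFun K ι)).map' _
      (Submodule.ker_subtype _)
    exact this
  -- `(ι → K) → K` acts pointwise on fields, and constant fields are independent over it.
  have := linearIndependent_smul (R := K) (S := (ι → K) → K)
    (A := (ι → K) → ExteriorAlgebra K (ι → K)) linearIndependent_quadraticMonomial
    (hω.const (ι → K))
  exact this

theorem smul_mem_span_quadraticBivector [CommRing K] (z : Sym2 ι)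
    {w : ExteriorAlgebra K (ι → K)} (hw : w ∈ ⋀[K]^2 (ι → K)) :
    (fun x => quadraticMonomial z x • w) ∈ Submodule.span K (Set.range quadraticBivector) := by
  let μ : ExteriorAlgebra K (ι → K) →ₗ[K] (ι → K) → ExteriorAlgebra K (ι → K) :=
    LinearMap.pi fun x => quadraticMonomial z x • LinearMap.id
  rw [← exteriorPower.ιMulti_family_span_fixedDegree_of_span K (Pi.basisFun K ι).span_eq] at hw
  have := Submodule.mem_map_of_mem (f := μ) hw
  rw [Submodule.map_span] at this
  refine Submodule.span_mono ?_ this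
  rintro _ ⟨_, ⟨s, rfl⟩, rfl⟩
  exact ⟨(z, s), rfl⟩

variable [DecidableEq ι]

theorem range_eq_span_quadraticBivector [CommRing K]
    (J : ⋀[K]^2 (Matrix ι ι K) →ₗ[K] ((ι → K) → ExteriorAlgebra K (ι → K)))
    (hJ : ∀ (A B : Matrix ι ι K) (x : ι → K),
      J (exteriorPower.ιMulti K 2 ![A, B]) x = ιMulti K 2 ![Aᵀ *ᵥ x, Bᵀ *ᵥ x]) :
    LinearMap.range J = Submodule.span K (Set.range quadraticBivector) := by
  have hspan :
      Submodule.span K (Set.range fun p : ι × ι => Matrix.single p.1 p.2 (1 : K)) = ⊤ := by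
    rw [← (Matrix.stdBasis K ι ι).span_eq]
    congr 2
    ext p : 1
    exact (Matrix.stdBasis_eq_single K p.1 p.2).symm
  apply le_antisymm
  · rw [LinearMap.range_eq_map, ← exteriorPower.ιMulti_span_of_span K 2 _ hspan,
      Submodule.map_span, Submodule.span_le]
    rintro _ ⟨_, ⟨a, ha, rfl⟩, rfl⟩
    obtain ⟨⟨i, j⟩, hij : Matrix.single i j 1 = a 0⟩ := ha (Set.mem_range_self 0)
    obtain ⟨⟨k, l⟩, hkl : Matrix.single k l 1 = a 1⟩ := ha (Set.mem_range_self 1)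
    have ha' : a = ![a 0, a 1] := (FinVec.etaExpand_eq a).symm
    rw [SetLike.mem_coe, ha', ← hij, ← hkl, apply_ιMulti_single_single J hJ]
    exact smul_mem_span_quadraticBivector _ (ιMulti_range K 2 (Set.mem_range_self _))
  · rw [Submodule.span_le]
    rintro _ ⟨⟨z, s⟩, rfl⟩
    induction z with | _ i k => ?_
    set f := Set.powersetCard.ofFinEmbEquiv.symm s
    refine ⟨exteriorPower.ιMulti K 2 ![Matrix.single i (f 0) 1, Matrix.single k (f 1) 1], ?_⟩
    rw [apply_ιMulti_single_single J hJ]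
    funext x
    simp only [quadraticBivector, ιMulti_family]
    congr 2
    ext m : 1
    fin_cases m <;> simp [f]

theorem finrank_range_eq_choose_mul_choose [Field K] [Infinite K]
    (J : ⋀[K]^2 (Matrix ι ι K) →ₗ[K] ((ι → K) → ExteriorAlgebra K (ι → K)))
    (hJ : ∀ (A B : Matrix ι ι K) (x : ι → K),
      J (exteriorPower.ιMulti K 2 ![A, B]) x = ιMulti K 2 ![Aᵀ *ᵥ x, Bᵀ *ᵥ x]) :
    Module.finrank K (LinearMap.range J)
      = (Fintype.card ι + 1).choose 2 * (Fintype.card ι).choose 2 := by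
  rw [range_eq_span_quadraticBivector J hJ,
    finrank_span_eq_card linearIndependent_quadraticBivector, Fintype.card_prod, Sym2.card]
  simp only [Fintype.card_eq_nat_card, Set.powersetCard.card]

end

theorem Nat.choose_sq_two (n : ℕ) :
    (n ^ 2).choose 2 = (n + 1).choose 2 * n.choose 2 + n ^ 2 * (n ^ 2 - 1) / 4 := by
  have two_mul_choose_two : ∀ m : ℕ, 2 * m.choose 2 = m * (m - 1) := fun m => by
    rw [Nat.choose_two_right, Nat.mul_div_cancel' (Nat.even_mul_pred_self m).two_dvd]
  have hprod : n ^ 2 * (n ^ 2 - 1) = 4 * ((n + 1).choose 2 * n.choose 2) := by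
    have h₁ := two_mul_choose_two (n + 1)
    rw [Nat.add_sub_cancel] at h₁
    calc n ^ 2 * (n ^ 2 - 1) = ((n + 1) * n) * (n * (n - 1)) := by
          rw [← one_pow 2, Nat.sq_sub_sq, one_pow]; ring
      _ = 4 * ((n + 1).choose 2 * n.choose 2) := by rw [← h₁, ← two_mul_choose_two n]; ring
  have hsq := two_mul_choose_two (n ^ 2)
  rw [hprod, Nat.mul_div_cancel_left _ (by norm_num)]
  omega

theorem stmt_6_general (n : ℕ)
    (J2 : ⋀[ℝ]^2 (Matrix (Fin n) (Fin n) ℝ) →ₗ[ℝ]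
          ((Fin n → ℝ) → ExteriorAlgebra ℝ (Fin n → ℝ)))
    (hJ2 : ∀ (A B : Matrix (Fin n) (Fin n) ℝ) (x : Fin n → ℝ),
      J2 ⟨ExteriorAlgebra.ιMulti ℝ 2 ![A, B],
          ExteriorAlgebra.ιMulti_range ℝ 2 (Set.mem_range_self _)⟩ x
        = ExteriorAlgebra.ιMulti ℝ 2 ![Aᵀ *ᵥ x, Bᵀ *ᵥ x]) :
    Module.finrank ℝ (LinearMap.ker J2) = n ^ 2 * (n ^ 2 - 1) / 4 := by
  have hrange := finrank_range_eq_choose_mul_choose J2 hJ2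
  have hdom : Module.finrank ℝ (⋀[ℝ]^2 (Matrix (Fin n) (Fin n) ℝ)) = (n ^ 2).choose 2 := by
    rw [exteriorPower.finrank_eq, Module.finrank_matrix, Module.finrank_self, Fintype.card_fin,
      mul_one, sq]
  have hsum := J2.finrank_range_add_finrank_ker
  rw [hrange, hdom, Fintype.card_fin, Nat.choose_sq_two] at hsum
  omega

/-- The linear map `J² : Λ²(gl(n,ℝ)) → (ℝⁿ → Λ²(ℝⁿ))` determined
by `J²(A ∧ B)(x) = (Aᵀx) ∧ (Bᵀx)` has kernel of dimension `n²(n²−1)/4`.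
Here `Λ²(gl(n,ℝ))` is the second exterior power `⋀[ℝ]^2` (a submodule of the
exterior algebra), and the codomain consists of functions from `ℝⁿ` to the
exterior algebra of `ℝⁿ` (in which `Λ²(ℝⁿ)` sits). -/
theorem stmt_6 (n : ℕ) (hn : 1 ≤ n)
    (J2 : ⋀[ℝ]^2 (Matrix (Fin n) (Fin n) ℝ) →ₗ[ℝ]
          ((Fin n → ℝ) → ExteriorAlgebra ℝ (Fin n → ℝ)))
    (hJ2 : ∀ (A B : Matrix (Fin n) (Fin n) ℝ) (x : Fin n → ℝ),
      J2 ⟨ExteriorAlgebra.ιMulti ℝ 2 ![A, B],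
          ExteriorAlgebra.ιMulti_range ℝ 2 (Set.mem_range_self _)⟩ x
        = ExteriorAlgebra.ιMulti ℝ 2 ![Aᵀ *ᵥ x, Bᵀ *ᵥ x]) :
    Module.finrank ℝ (LinearMap.ker J2) = n ^ 2 * (n ^ 2 - 1) / 4 :=
  stmt_6_general n J2 hJ2
end

section
/- Let n ≥ 1 and let J³ : Λ³(gl(n,ℝ)) → (ℝⁿ → Λ³(ℝⁿ)) be the linear map determined by J³(A ∧ B ∧ C)(x) = (Aᵀx) ∧ (Bᵀx) ∧ (Cᵀx) for A, B, C ∈ gl(n,ℝ) and x ∈ ℝⁿ. Then the kernel of J³ has dimension n²(n²−1)(5n²−8)/36. -/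
/-!
Rank–nullity: `⋀³ gl(n, ℝ)` has dimension `C(n², 3)`, so it suffices to compute the rank of `J³`.
Wedges of matrix units span `⋀³ gl(n, ℝ)`, and `J³` sends `E_{a₁j₁} ∧ E_{a₂j₂} ∧ E_{a₃j₃}` to the
field `x ↦ x_{a₁} x_{a₂} x_{a₃} • e_{j₁} ∧ e_{j₂} ∧ e_{j₃}`. Hence the image of `J³` is spanned by
the products of a cubic monomial function and a vector of `⋀³ ℝⁿ`, and such products of independent
families stay independent. Over an infinite field, monomial functions are as independent as
monomials, so the rank is `C(n + 2, 3) · C(n, 3)`, and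
`C(n², 3) - C(n + 2, 3) · C(n, 3) = n²(n² - 1)(5n² - 8)/36`.
-/

open Set Submodule
open scoped Matrix

section SmulFunctions

variable {K α W ι κ : Type*} [Field K] [AddCommGroup W] [Module K W]

theorem LinearIndependent.fun_smul_prod [Fintype ι] [Fintype κ] {f : ι → α → K} {v : κ → W}
    (hf : LinearIndependent K f) (hv : LinearIndependent K v) :
    LinearIndependent K (fun p : ι × κ => fun x => f p.1 x • v p.2) := by
  rw [Fintype.linearIndependent_iff] at hf hv ⊢
  intro c hc p
  have hcoeff : ∀ k x, ∑ i, c (i, k) * f i x = 0 := fun k x =>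
    hv (fun k => ∑ i, c (i, k) * f i x) (by
      have := congrFun hc x
      simp only [Finset.sum_apply, Pi.smul_apply, Pi.zero_apply, smul_smul,
        Fintype.sum_prod_type] at this
      rw [Finset.sum_comm] at this
      simpa only [Finset.sum_smul] using this) k
  exact hf (fun i => c (i, p.2)) (funext fun x => by simpa using hcoeff p.2 x) p.1

theorem Submodule.span_range_coe_basis {R M : Type*} [Semiring R] [AddCommMonoid M] [Module R M]
    {p : Submodule R M} (b : Module.Basis ι R p) : span R (range fun i => (b i : M)) = p := by
  rw [range_comp', ← p.coe_subtype, span_image, b.span_eq, map_top, range_subtype]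

variable (K α W) in
def pointwiseSmulBilin : (α → K) →ₗ[K] W →ₗ[K] α → W :=
  LinearMap.mk₂ K (fun g w x => g x • w)
    (fun _ _ _ => funext fun _ => add_smul _ _ _)
    (fun _ _ _ => funext fun _ => mul_smul _ _ _)
    (fun _ _ _ => funext fun _ => smul_add _ _ _)
    (fun _ _ _ => funext fun _ => smul_comm _ _ _)

@[simp] theorem pointwiseSmulBilin_apply (g : α → K) (w : W) :
    pointwiseSmulBilin K α W g w = fun x => g x • w :=
  rfl

theorem finrank_span_image2_smul (s : Set (α → K)) (t : Set W)
    [FiniteDimensional K (span K s)] [FiniteDimensional K (span K t)] :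
    Module.finrank K (span K (image2 (fun g w x => g x • w) s t)) =
      Module.finrank K (span K s) * Module.finrank K (span K t) := by
  set bs := Module.finBasis K (span K s)
  set bt := Module.finBasis K (span K t)
  have hindep : LinearIndependent K
      (fun p : Fin _ × Fin _ => fun x => (bs p.1 : α → K) x • (bt p.2 : W)) :=
    LinearIndependent.fun_smul_prod (f := fun i => (bs i : α → K)) (v := fun i => (bt i : W))
      (bs.linearIndependent.map' (span K s).subtype (ker_subtype _))
      (bt.linearIndependent.map' (span K t).subtype (ker_subtype _))
  have hspan : span K (image2 (fun g w x => g x • w) s t) =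
      span K (range fun p : Fin _ × Fin _ => fun x => (bs p.1 : α → K) x • (bt p.2 : W)) :=
    calc span K (image2 (fun g w x => g x • w) s t)
        = map₂ (pointwiseSmulBilin K α W) (span K s) (span K t) := by
          rw [map₂_span_span]; simp only [pointwiseSmulBilin_apply]
      _ = map₂ (pointwiseSmulBilin K α W) (span K (range fun i => (bs i : α → K)))
            (span K (range fun i => (bt i : W))) := by
          rw [span_range_coe_basis, span_range_coe_basis]
      _ = _ := by
          rw [map₂_span_span, image2_range]; simp only [pointwiseSmulBilin_apply]
  rw [hspan, finrank_span_eq_card hindep, Fintype.card_prod, Fintype.card_fin, Fintype.card_fin]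

end SmulFunctions

namespace MvPolynomial

theorem span_range_prod_X (σ R : Type*) [CommSemiring R] (k : ℕ) :
    span R (range fun a : Fin k → σ => ∏ i, (X (a i) : MvPolynomial σ R)) =
      homogeneousSubmodule σ R k := by
  rw [← homogeneousSubmodule_one_pow, homogeneousSubmodule_one_eq_span_X, span_pow]
  congr 1
  ext p
  rw [Set.mem_pow_iff_prod]
  constructor
  · rintro ⟨a, rfl⟩
    exact ⟨fun i => X (a i), fun i => mem_range_self _, rfl⟩
  · rintro ⟨f, hf, rfl⟩
    choose a ha using hf
    exact ⟨a, by simp only [ha]⟩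

theorem finrank_homogeneousSubmodule (σ K : Type*) [Fintype σ] [Field K] (k : ℕ) :
    Module.finrank K (homogeneousSubmodule σ K k) = (Fintype.card σ + k - 1).choose k := by
  classical
  have hdeg : {d : σ →₀ ℕ | d.degree = k} =
      ((Finset.univ : Finset σ).finsuppAntidiag k : Set (σ →₀ ℕ)) := by
    ext d
    simp [Finsupp.degree_eq_sum]
  rw [homogeneousSubmodule_eq_finsupp_supported,
    (AddMonoidAlgebra.supportedEquivFinsupp _).finrank_eq, hdeg, Module.finrank_finsupp_self]
  simp only [Finset.coe_sort_coe, Fintype.card_coe, Finset.card_finsuppAntidiag_nat_eq_choose,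
    Finset.card_univ]

theorem finrank_span_range_prod_apply (σ K : Type*) [Fintype σ] [Field K] [Infinite K] (k : ℕ) :
    Module.finrank K (span K (range fun a : Fin k → σ => fun x : σ → K => ∏ i, x (a i))) =
      (Fintype.card σ + k - 1).choose k := by
  set ev : MvPolynomial σ K →ₗ[K] (σ → K) → K :=
    LinearMap.pi fun x => (aeval x).toLinearMap
  have hev : Function.Injective ev := fun p q hpq =>
    funext fun x => by simpa [ev] using congrFun hpq x
  have himage : (range fun a : Fin k → σ => fun x : σ → K => ∏ i, x (a i)) =
      ev '' range fun a : Fin k → σ => ∏ i, (X (a i) : MvPolynomial σ K) := by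
    rw [← range_comp']
    congr 1
    ext a x
    simp [ev]
  rw [himage, span_image, span_range_prod_X, ← finrank_homogeneousSubmodule σ K k]
  exact (Submodule.equivMapOfInjective ev hev _).finrank_eq.symm

end MvPolynomial

theorem ExteriorAlgebra.span_range_ιMulti_comp {R M ι : Type*} [CommRing R] [AddCommGroup M]
    [Module R M] {v : ι → M} (hv : span R (range v) = ⊤) (k : ℕ) :
    span R (range fun j : Fin k → ι => ιMulti R k fun i => v (j i)) = ⋀[R]^k M := by
  rw [← exteriorPower.ιMulti_span_fixedDegree_of_span_eq_top R k M hv]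
  congr 1
  ext w
  simp [range_subset_range_iff_exists_comp, Function.comp_def]

theorem Nat.add_two_choose_three_mul_six (m : ℕ) :
    (m + 2).choose 3 * 6 = (m + 2) * (m + 1) * m := by
  have := Nat.descFactorial_eq_factorial_mul_choose (m + 2) 3
  simp [Nat.descFactorial, Nat.factorial] at this
  linarith

theorem Nat.eq_of_add_two_choose_three_mul_add_eq (n d : ℕ)
    (h : (n + 2).choose 3 * n.choose 3 + d = (n * n).choose 3) :
    d = n ^ 2 * (n ^ 2 - 1) * (5 * n ^ 2 - 8) / 36 := by
  rcases n with _ | _ | m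
  · simpa using h
  · simpa using h
  refine Nat.eq_div_of_mul_eq_left (by norm_num) ?_
  have hsq : (m + 2) ^ 2 = m ^ 2 + 4 * m + 4 := by ring
  rw [show m + 1 + 1 = m + 2 from rfl, hsq,
    show m ^ 2 + 4 * m + 4 - 1 = m ^ 2 + 4 * m + 3 by omega,
    show 5 * (m ^ 2 + 4 * m + 4) - 8 = 5 * m ^ 2 + 20 * m + 12 by omega]
  have h₁ := Nat.add_two_choose_three_mul_six (m + 2)
  have h₂ := Nat.add_two_choose_three_mul_six m
  have h₃ := Nat.add_two_choose_three_mul_six (m ^ 2 + 4 * m + 2)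
  rw [show (m + 2) * (m + 2) = m ^ 2 + 4 * m + 2 + 2 by ring] at h
  nlinarith

section PolyvectorFields

variable {K : Type*} [Field K] {n k : ℕ}
  {J : ⋀[K]^k (Matrix (Fin n) (Fin n) K) →ₗ[K] (Fin n → K) → ExteriorAlgebra K (Fin n → K)}

theorem apply_ιMulti_single
    (hJ : ∀ v x,
      J (exteriorPower.ιMulti K k v) x = ExteriorAlgebra.ιMulti K k fun i => (v i)ᵀ *ᵥ x)
    (a j : Fin k → Fin n) :
    J (exteriorPower.ιMulti K k fun i => Matrix.single (a i) (j i) 1) =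
      fun x => (∏ i, x (a i)) • ExteriorAlgebra.ιMulti K k fun i => Pi.single (j i) 1 := by
  funext x
  simp only [hJ, Matrix.transpose_single, Matrix.single_mulVec_eq, one_mul]
  exact (ExteriorAlgebra.ιMulti K k).map_smul_univ _ _

theorem range_eq_span_image2_smul
    (hJ : ∀ v x,
      J (exteriorPower.ιMulti K k v) x = ExteriorAlgebra.ιMulti K k fun i => (v i)ᵀ *ᵥ x) :
    LinearMap.range J = span K (image2 (fun g w x => g x • w)
      (range fun a : Fin k → Fin n => fun x : Fin n → K => ∏ i, x (a i))
      (range fun j : Fin k → Fin n =>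
        ExteriorAlgebra.ιMulti K k fun i => Pi.single (j i) 1)) := by
  set E : Fin n × Fin n → Matrix (Fin n) (Fin n) K := fun p => Matrix.single p.1 p.2 1
  have hE : span K (range E) = ⊤ := by
    rw [← (Matrix.stdBasis K (Fin n) (Fin n)).span_eq]
    congr 2
    exact funext fun p => (Matrix.stdBasis_eq_single K p.1 p.2).symm
  rw [LinearMap.range_eq_map, ← exteriorPower.ιMulti_span_of_span K k _ hE, map_span,
    ← image_comp]
  congr 1
  ext f
  constructor
  · rintro ⟨v, hv, rfl⟩
    obtain ⟨p, rfl⟩ := range_subset_range_iff_exists_comp.mp hv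
    exact ⟨_, ⟨Prod.fst ∘ p, rfl⟩, _, ⟨Prod.snd ∘ p, rfl⟩,
      (apply_ιMulti_single hJ _ _).symm⟩
  · rintro ⟨_, ⟨a, rfl⟩, _, ⟨j, rfl⟩, rfl⟩
    exact ⟨fun i => E (a i, j i), range_subset_iff.2 fun i => mem_range_self _,
      apply_ιMulti_single hJ a j⟩

theorem finrank_range_eq_choose_mul_choose_s7 [Infinite K]
    (hJ : ∀ v x,
      J (exteriorPower.ιMulti K k v) x = ExteriorAlgebra.ιMulti K k fun i => (v i)ᵀ *ᵥ x) :
    Module.finrank K (LinearMap.range J) = (n + k - 1).choose k * n.choose k := by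
  have hsingle : span K (range fun l : Fin n => (Pi.single l 1 : Fin n → K)) = ⊤ := by
    rw [← (Pi.basisFun K (Fin n)).span_eq]
    congr 2
    exact funext fun l => (Pi.basisFun_apply K (Fin n) l).symm
  have := FiniteDimensional.span_of_finite K
    (finite_range fun a : Fin k → Fin n => fun x : Fin n → K => ∏ i, x (a i))
  have := FiniteDimensional.span_of_finite K
    (finite_range fun j : Fin k → Fin n =>
      ExteriorAlgebra.ιMulti K k fun i => (Pi.single (j i) 1 : Fin n → K))
  rw [range_eq_span_image2_smul hJ]
  refine (finrank_span_image2_smul _ _).trans ?_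
  rw [MvPolynomial.finrank_span_range_prod_apply,
    ExteriorAlgebra.span_range_ιMulti_comp hsingle, exteriorPower.finrank_eq,
    Module.finrank_fin_fun, Fintype.card_fin]

end PolyvectorFields

theorem stmt_7_general (n : ℕ)
    (J3 : ⋀[ℝ]^3 (Matrix (Fin n) (Fin n) ℝ) →ₗ[ℝ]
          ((Fin n → ℝ) → ExteriorAlgebra ℝ (Fin n → ℝ)))
    (hJ3 : ∀ (A B C : Matrix (Fin n) (Fin n) ℝ) (x : Fin n → ℝ),
      J3 ⟨ExteriorAlgebra.ιMulti ℝ 3 ![A, B, C],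
          ExteriorAlgebra.ιMulti_range ℝ 3 (Set.mem_range_self _)⟩ x
        = ExteriorAlgebra.ιMulti ℝ 3 ![Aᵀ *ᵥ x, Bᵀ *ᵥ x, Cᵀ *ᵥ x]) :
    Module.finrank ℝ (LinearMap.ker J3)
      = n ^ 2 * (n ^ 2 - 1) * (5 * n ^ 2 - 8) / 36 := by
  have hJ : ∀ v x, J3 (exteriorPower.ιMulti ℝ 3 v) x =
      ExteriorAlgebra.ιMulti ℝ 3 fun i => (v i)ᵀ *ᵥ x := by
    intro v x
    have hv : v = ![v 0, v 1, v 2] := by ext i; fin_cases i <;> rfl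
    have hw : (fun i => (v i)ᵀ *ᵥ x) = ![(v 0)ᵀ *ᵥ x, (v 1)ᵀ *ᵥ x, (v 2)ᵀ *ᵥ x] := by
      ext i; fin_cases i <;> rfl
    rw [hw, hv]
    exact hJ3 _ _ _ x
  have hrank := J3.finrank_range_add_finrank_ker
  rw [finrank_range_eq_choose_mul_choose_s7 hJ, exteriorPower.finrank_eq, Module.finrank_matrix, Fintype.card_fin,
    Module.finrank_self, mul_one, show n + 3 - 1 = n + 2 from rfl] at hrank
  exact Nat.eq_of_add_two_choose_three_mul_add_eq n _ hrank

/-- The linear map `J³ : Λ³(gl(n,ℝ)) → (ℝⁿ → Λ³(ℝⁿ))` determined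
by `J³(A ∧ B ∧ C)(x) = (Aᵀx) ∧ (Bᵀx) ∧ (Cᵀx)` has kernel of dimension
`n²(n²−1)(5n²−8)/36`.  Here `Λ³(gl(n,ℝ))` is the third exterior power `⋀[ℝ]^3`
(a submodule of the exterior algebra), and the codomain consists of functions
from `ℝⁿ` to the exterior algebra of `ℝⁿ` (in which `Λ³(ℝⁿ)` sits). -/
theorem stmt_7 (n : ℕ) (hn : 1 ≤ n)
    (J3 : ⋀[ℝ]^3 (Matrix (Fin n) (Fin n) ℝ) →ₗ[ℝ]
          ((Fin n → ℝ) → ExteriorAlgebra ℝ (Fin n → ℝ)))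
    (hJ3 : ∀ (A B C : Matrix (Fin n) (Fin n) ℝ) (x : Fin n → ℝ),
      J3 ⟨ExteriorAlgebra.ιMulti ℝ 3 ![A, B, C],
          ExteriorAlgebra.ιMulti_range ℝ 3 (Set.mem_range_self _)⟩ x
        = ExteriorAlgebra.ιMulti ℝ 3 ![Aᵀ *ᵥ x, Bᵀ *ᵥ x, Cᵀ *ᵥ x]) :
    Module.finrank ℝ (LinearMap.ker J3)
      = n ^ 2 * (n ^ 2 - 1) * (5 * n ^ 2 - 8) / 36 :=
  stmt_7_general n J3 hJ3
end

section
/- Let a, b, c be real numbers, and let A be the 2×2 real matrix with rows (b, −a) and (c, −b). Define the family of reals r_{ik}^{jl} := (1/2)(A_{ij} δ_{kl} − A_{kl} δ_{ij}) for i,j,k,l ∈ {1,2}, corresponding to the element r = A ∧ I of gl(2,ℝ) ∧ gl(2,ℝ), where I is the identity matrix. Then: (i) r_{ik}^{jl} = −r_{ki}^{lj} for all indices and the component Yang–Baxter equations hold (for all i,j,k,l,m,p ∈ {1,2} with (i,j) < (k,l) < (m,p) lexicographically: Σ_{d=1}^{2} ( r_{ik}^{dl} r_{dm}^{jp} − r_{mk}^{dl}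 r_{di}^{pj} + r_{km}^{dp} r_{di}^{lj} − r_{im}^{dp} r_{dk}^{jl} + r_{mi}^{dj} r_{dk}^{pl} − r_{ki}^{dj} r_{dm}^{lp} ) = 0), so r is a classical r-matrix; and (ii) for every x = (x₁,x₂) ∈ ℝ², Σ_{i,j,k,l=1}^{2} r_{ik}^{jl} x_i x_k (e_j ∧ e_l) = (Aᵀx) ∧ x = (a x₁² + 2b x₁x₂ + c x₂²)(e₁ ∧ e₂) in Λ²(ℝ²). Consequently every quadratic Poisson structure on ℝ² is the image under J² of a classical r-matrix. -/
open scoped Matrix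

theorem vec_decomp (v : Fin 2 → ℝ) :
    v = v 0 • (Pi.single 0 (1:ℝ) : Fin 2 → ℝ) + v 1 • (Pi.single 1 (1:ℝ) : Fin 2 → ℝ) := by
  funext i
  fin_cases i <;> simp

set_option maxHeartbeats 2000000 in
theorem ybe_aux (a b c : ℝ) :
    let A : Matrix (Fin 2) (Fin 2) ℝ := Matrix.of ![![b, -a], ![c, -b]]
    let r : Fin 2 → Fin 2 → Fin 2 → Fin 2 → ℝ := fun i j k l =>
      (1 / 2) * (A i j * (if k = l then (1:ℝ) else 0)
                 - A k l * (if i = j then (1:ℝ) else 0))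
    (∀ i j k l m p : Fin 2,
      ∑ d : Fin 2,
        (r i d k l * r d j m p - r m d k l * r d p i j
         + r k d m p * r d l i j - r i d m p * r d j k l
         + r m d i j * r d p k l - r k d i j * r d l m p) = 0) := by
  intro A r
  have hr : ∀ i j k l : Fin 2, r i j k l =
      (1 / 2) * (A i j * (if k = l then (1:ℝ) else 0)
                 - A k l * (if i = j then (1:ℝ) else 0)) := fun _ _ _ _ => rfl
  have hA : ∀ u v : Fin 2, A u v = if u = 0 then (if v = 0 then b else -a)
      else (if v = 0 then c else -b) := by
    intro u v; fin_cases u <;> fin_cases v <;> simp [A]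
  simp only [Fin.sum_univ_two, hr, hA, Fin.forall_fin_two]
  norm_num
  and_intros <;> ring

/-- With `A = [[b, −a], [c, −b]]` and
`r_{ik}^{jl} = ½(A_{ij} δ_{kl} − A_{kl} δ_{ij})` (corresponding to `r = A ∧ I`):
(i) `r` is antisymmetric and the component Yang–Baxter equations hold, so `r`
is a classical r-matrix; (ii) for every `x ∈ ℝ²`,
`Σ r_{ik}^{jl} x_i x_k (e_j ∧ e_l) = (Aᵀx) ∧ x = (a x₁² + 2b x₁x₂ + c x₂²)(e₁ ∧ e₂)`.
Here `r i j k l` denotes `r_{i k}^{j l}`. -/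
theorem stmt_9 (a b c : ℝ) :
    let A : Matrix (Fin 2) (Fin 2) ℝ := Matrix.of ![![b, -a], ![c, -b]]
    let r : Fin 2 → Fin 2 → Fin 2 → Fin 2 → ℝ := fun i j k l =>
      (1 / 2) * (A i j * (if k = l then (1:ℝ) else 0)
                 - A k l * (if i = j then (1:ℝ) else 0))
    (∀ i j k l, r i j k l = - r k l i j) ∧
    (∀ i j k l m p : Fin 2,
      (i < k ∨ (i = k ∧ j < l)) → (k < m ∨ (k = m ∧ l < p)) →
      ∑ d : Fin 2,
        (r i d k l * r d j m p - r m d k l * r d p i j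
         + r k d m p * r d l i j - r i d m p * r d j k l
         + r m d i j * r d p k l - r k d i j * r d l m p) = 0) ∧
    (∀ x : Fin 2 → ℝ,
      (∑ i : Fin 2, ∑ j : Fin 2, ∑ k : Fin 2, ∑ l : Fin 2,
        (r i j k l * x i * x k) •
          (ExteriorAlgebra.ι ℝ (Pi.single j (1:ℝ) : Fin 2 → ℝ) *
           ExteriorAlgebra.ι ℝ (Pi.single l (1:ℝ) : Fin 2 → ℝ)))
        = ExteriorAlgebra.ι ℝ (Aᵀ *ᵥ x) * ExteriorAlgebra.ι ℝ x ∧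
      (∑ i : Fin 2, ∑ j : Fin 2, ∑ k : Fin 2, ∑ l : Fin 2,
        (r i j k l * x i * x k) •
          (ExteriorAlgebra.ι ℝ (Pi.single j (1:ℝ) : Fin 2 → ℝ) *
           ExteriorAlgebra.ι ℝ (Pi.single l (1:ℝ) : Fin 2 → ℝ)))
        = (a * x 0 ^ 2 + 2 * b * x 0 * x 1 + c * x 1 ^ 2) •
            (ExteriorAlgebra.ι ℝ (Pi.single 0 (1:ℝ) : Fin 2 → ℝ) *
             ExteriorAlgebra.ι ℝ (Pi.single 1 (1:ℝ) : Fin 2 → ℝ))) := by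
  intro A r
  have hr : ∀ i j k l : Fin 2, r i j k l =
      (1 / 2) * (A i j * (if k = l then (1:ℝ) else 0)
                 - A k l * (if i = j then (1:ℝ) else 0)) := fun _ _ _ _ => rfl
  refine ⟨fun i j k l => by rw [hr, hr]; ring, ?_, ?_⟩
  · intro i j k l m p _ _
    exact ybe_aux a b c i j k l m p
  · intro x
    set e0 : Fin 2 → ℝ := (Pi.single 0 (1:ℝ) : Fin 2 → ℝ) with he0
    set e1 : Fin 2 → ℝ := (Pi.single 1 (1:ℝ) : Fin 2 → ℝ) with he1
    have h00 : ExteriorAlgebra.ι ℝ e0 * ExteriorAlgebra.ι ℝ e0 = 0 :=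
      ExteriorAlgebra.ι_sq_zero e0
    have h11 : ExteriorAlgebra.ι ℝ e1 * ExteriorAlgebra.ι ℝ e1 = 0 :=
      ExteriorAlgebra.ι_sq_zero e1
    have h10 : ExteriorAlgebra.ι ℝ e1 * ExteriorAlgebra.ι ℝ e0 =
        -(ExteriorAlgebra.ι ℝ e0 * ExteriorAlgebra.ι ℝ e1) :=
      eq_neg_of_add_eq_zero_left (ExteriorAlgebra.ι_add_mul_swap e1 e0)
    have key : (∑ i : Fin 2, ∑ j : Fin 2, ∑ k : Fin 2, ∑ l : Fin 2,
        (r i j k l * x i * x k) •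
          (ExteriorAlgebra.ι ℝ (Pi.single j (1:ℝ) : Fin 2 → ℝ) *
           ExteriorAlgebra.ι ℝ (Pi.single l (1:ℝ) : Fin 2 → ℝ)))
        = (a * x 0 ^ 2 + 2 * b * x 0 * x 1 + c * x 1 ^ 2) •
            (ExteriorAlgebra.ι ℝ e0 * ExteriorAlgebra.ι ℝ e1) := by
      simp only [Fin.sum_univ_two, hr, A, Matrix.of_apply, Matrix.cons_val', Matrix.cons_val_zero,
        Matrix.cons_val_one, Matrix.head_cons, Matrix.empty_val', Matrix.cons_val_fin_one,
        Matrix.head_fin_const, ← he0, ← he1]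
      norm_num [h00, h11, h10]
      module
    refine ⟨?_, key⟩
    rw [key]
    have hAx : Aᵀ *ᵥ x = (b * x 0 + c * x 1) • e0 + (-a * x 0 + -b * x 1) • e1 := by
      rw [vec_decomp (Aᵀ *ᵥ x)]
      simp only [he0, he1]
      simp [A, Matrix.mulVec, dotProduct, Fin.sum_univ_two]
    have hix : ExteriorAlgebra.ι ℝ x
        = x 0 • ExteriorAlgebra.ι ℝ e0 + x 1 • ExteriorAlgebra.ι ℝ e1 := by
      rw [congrArg (ExteriorAlgebra.ι ℝ) (vec_decomp x)]
      simp [he0, he1]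
    rw [hAx, hix]
    simp only [map_add, map_smul, mul_add, add_mul, smul_mul_assoc, mul_smul_comm,
      smul_smul, h00, h11, h10, smul_zero, add_zero, zero_add, smul_neg]
    module
end

section
/- Let n ≥ 1 and let (c_{ij})_{i,j ∈ {1,…,n}} be real numbers with c_{ji} = −c_{ij}. Define the family r_{ik}^{jl} := c_{ik} δ_{ij} δ_{kl} for i,j,k,l ∈ {1,…,n}, corresponding to the element r = Σ_{i,j} c_{ij} E_{ii} ∧ E_{jj} of Λ²(gl(n,ℝ)). Then: (i) r_{ik}^{jl} = −r_{ki}^{lj} for all indices and the component Yang–Baxter equations hold (for all i,j,k,l,m,p ∈ {1,…,n} with (i,j) < (k,l) < (m,p) lexicographically: Σ_{d=1}^{n} ( r_{ik}^{dl} r_{dm}^{jp} − r_{mk}^{dl} r_{di}^{pj} + r_{km}^{dp} r_{di}^{lj} − r_{im}^{dp} r_{dk}^{jl} + r_{mi}^{dj} r_{dk}^{pl} − r_{ki}^{dj} r_{dm}^{lp} ) = 0), so r is a classical r-matrix; and (ii) for every x ∈ ℝⁿ, Σ_{i,j,k,l=1}^{n} r_{ik}^{jl} x_i x_k (e_j ∧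 e_l) = Σ_{i,j=1}^{n} c_{ij} x_i x_j (e_i ∧ e_j) in Λ²(ℝⁿ). Hence every Cartan-type quadratic Poisson structure Σ_{i,j} c_{ij} x_i x_j ∂_i ∧ ∂_j on ℝⁿ is the image under J² of the classical r-matrix Σ_{i,j} c_{ij} E_{ii} ∧ E_{jj}. -/
/-- For antisymmetric reals `c_{ij}`, the family
`r_{ik}^{jl} = c_{ik} δ_{ij} δ_{kl}` (corresponding to
`r = Σ c_{ij} E_{ii} ∧ E_{jj} ∈ Λ²(gl(n,ℝ))`) satisfies:
(i) `r_{ik}^{jl} = −r_{ki}^{lj}` and the component Yang–Baxter equations, so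
`r` is a classical r-matrix; and (ii) for every `x ∈ ℝⁿ`,
`Σ r_{ik}^{jl} x_i x_k (e_j ∧ e_l) = Σ c_{ij} x_i x_j (e_i ∧ e_j)`.
Hence every Cartan-type quadratic Poisson structure on `ℝⁿ` is the image under
`J²` of a classical r-matrix.  Here `r i j k l` denotes `r_{i k}^{j l}`. -/
theorem stmt_11 (n : ℕ) (hn : 1 ≤ n)
    (c : Fin n → Fin n → ℝ) (hc : ∀ i j, c j i = - c i j) :
    let r : Fin n → Fin n → Fin n → Fin n → ℝ := fun i j k l =>
      c i k * (if i = j then (1:ℝ) else 0) * (if k = l then (1:ℝ) else 0)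
    (∀ i j k l, r i j k l = - r k l i j) ∧
    (∀ i j k l m p : Fin n,
      (i < k ∨ (i = k ∧ j < l)) → (k < m ∨ (k = m ∧ l < p)) →
      ∑ d : Fin n,
        (r i d k l * r d j m p - r m d k l * r d p i j
         + r k d m p * r d l i j - r i d m p * r d j k l
         + r m d i j * r d p k l - r k d i j * r d l m p) = 0) ∧
    (∀ x : Fin n → ℝ,
      (∑ i : Fin n, ∑ j : Fin n, ∑ k : Fin n, ∑ l : Fin n,
        (r i j k l * x i * x k) •
          (ExteriorAlgebra.ι ℝ (Pi.single j (1:ℝ) : Fin n → ℝ) *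
           ExteriorAlgebra.ι ℝ (Pi.single l (1:ℝ) : Fin n → ℝ)))
        = ∑ i : Fin n, ∑ j : Fin n,
            (c i j * x i * x j) •
              (ExteriorAlgebra.ι ℝ (Pi.single i (1:ℝ) : Fin n → ℝ) *
               ExteriorAlgebra.ι ℝ (Pi.single j (1:ℝ) : Fin n → ℝ))) := by
  intro r
  refine ⟨?_, ?_, ?_⟩
  · intro i j k l
    simp only [r]
    rcases eq_or_ne i j with h|h <;> rcases eq_or_ne k l with h'|h' <;>
      simp [h, h', eq_comm] <;> exact hc _ _
  · intro i j k l m p _ _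
    apply Finset.sum_eq_zero
    intro d _
    have key : ∀ a g b e f h : Fin n, r a d b e * r d g f h = r a d f h * r d g b e := by
      intro a g b e f h
      simp only [r]
      rcases eq_or_ne a d with rfl | hne
      · ring
      · simp [hne]
    rw [key i j k l m p, key m p k l i j, key k l m p i j]
    ring
  · intro x
    simp only [r, ite_mul, mul_ite, one_mul, zero_mul, mul_zero, mul_one, ite_smul,
      zero_smul, Finset.sum_ite_eq, Finset.mem_univ, if_true]
    simp only [Finset.sum_ite_irrel, Finset.sum_const_zero, Finset.sum_ite_eq,
      Finset.mem_univ, if_true]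
end
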